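/- arXiv:1503.03850 — 6 statements merged into one kernel-verified Lean document; each statement's English description precedes it below -/
import Mathlib

section
/- Let N ≥ 0 and let Γ be a subgroup of Homeo₊(I) such that every non-identity element of Γ has at most N fixed points in (0,1). Then Γ is either Abelian or contains a free semigroup on two generators. -/
open Set

noncomputable section

/-- The group of orientation-preserving homeomorphisms of `I = [0,1]` (each fixing the
endpoints), modeled as order-isomorphisms of the unit interval. -/
abbrev HomeoI : Type := ↥unitInterval ≃o ↥unitInterval

/-- The set of fixed points of `f` lying in the open interval `(0,1)`. -/
def interiorFixedPts (f : HomeoI) : Set ↥unitInterval :=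
  {x | f x = x ∧ 0 < (x : ℝ) ∧ (x : ℝ) < 1}

/-- `f` and `g` generate a free semigroup on two generators: the canonical semigroup
homomorphism from the free semigroup on two letters sending the letters to `f` and `g`
is injective. -/
def FreeSemigroupPair {G : Type*} [Group G] (f g : G) : Prop :=
  Function.Injective
    ⇑(FreeSemigroup.lift (fun b : Bool => if b then f else g) : FreeSemigroup Bool →ₙ* G)

local instance : Fact ((0:ℝ) ≤ 1) := ⟨zero_le_one⟩

namespace NavasAux

abbrev II : Type := ↥unitInterval

lemma mul_app (f g : HomeoI) (x : II) : (f * g) x = f (g x) := rfl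
lemma one_app (x : II) : (1 : HomeoI) x = x := rfl
lemma inv_app (f : HomeoI) (x : II) : (f⁻¹) x = f.symm x := rfl

lemma apply_inv_apply (f : HomeoI) (x : II) : f (f⁻¹ x) = x := f.apply_symm_apply x
lemma inv_apply_apply (f : HomeoI) (x : II) : f⁻¹ (f x) = x := f.symm_apply_apply x

lemma pow_app_succ (f : HomeoI) (n : ℕ) (x : II) : (f^(n+1)) x = f ((f^n) x) := by
  rw [pow_succ']; rfl

lemma map_zero' (f : HomeoI) : f 0 = 0 := by
  refine le_antisymm ?_ unitInterval.nonneg'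
  have h0 : (0 : II) ≤ f.symm 0 := unitInterval.nonneg'
  have := f.monotone h0
  rwa [f.apply_symm_apply] at this

lemma map_one' (f : HomeoI) : f 1 = 1 := by
  refine le_antisymm unitInterval.le_one' ?_
  have h0 : f.symm 1 ≤ (1 : II) := unitInterval.le_one'
  have := f.monotone h0
  rwa [f.apply_symm_apply] at this

lemma fix_pow (f : HomeoI) (u : II) (h : f u = u) (n : ℕ) : (f^n) u = u := by
  induction n with
  | zero => rfl
  | succ n ih => rw [pow_app_succ, ih, h]

lemma fix_inv (f : HomeoI) (u : II) (h : f u = u) : f⁻¹ u = u := by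
  conv_lhs => rw [← h]
  exact f.symm_apply_apply u

lemma lt_iff_inv_gt (f : HomeoI) (x : II) : f x < x ↔ x < f⁻¹ x := by
  constructor
  · intro h
    have := f.symm.strictMono h
    rwa [f.symm_apply_apply] at this
  · intro h
    have := f.strictMono h
    rwa [apply_inv_apply] at this

/-- Knaster–Tarski style fixed point between an up-point and a down-point. -/
lemma exists_fixed_between (f : HomeoI) (x y : II) (hxy : x ≤ y)
    (hx : x ≤ f x) (hy : f y ≤ y) : ∃ z, x ≤ z ∧ z ≤ y ∧ f z = z := by
  set S : Set II := {w | x ≤ w ∧ w ≤ y ∧ w ≤ f w} with hS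
  have hxS : x ∈ S := ⟨le_rfl, hxy, hx⟩
  set z := sSup S with hz
  have hxz : x ≤ z := le_sSup hxS
  have hzy : z ≤ y := sSup_le (fun w hw => hw.2.1)
  have hzfz : z ≤ f z := by
    refine sSup_le (fun w hw => ?_)
    exact hw.2.2.trans (f.monotone (le_sSup hw))
  have hfzz : f z ≤ z := by
    by_contra hlt
    push_neg at hlt
    have hw' : f z ∈ S := by
      refine ⟨hxz.trans hzfz, ?_, f.monotone hzfz⟩
      exact (f.monotone hzy).trans hy
    exact absurd (le_sSup hw') (not_le.mpr hlt)
  exact ⟨z, hxz, hzy, le_antisymm hfzz hzfz⟩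

/-- If `f` has no fixed points in `(u,v)` and is above the identity somewhere in `(u,v)`,
it is above the identity everywhere on `(u,v)`. -/
lemma sign_pos (f : HomeoI) (u v : II)
    (hfree : ∀ x, u < x → x < v → f x ≠ x) (x₀ : II) (hx₀u : u < x₀) (hx₀v : x₀ < v)
    (hpos : x₀ < f x₀) : ∀ x, u < x → x < v → x < f x := by
  intro x hxu hxv
  rcases lt_trichotomy x (f x) with h | h | h
  · exact h
  · exact absurd h.symm (hfree x hxu hxv)
  · -- f x < x : derive a fixed point, contradiction
    exfalso
    rcases le_total x x₀ with hc | hc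
    · -- repelling pattern: use f⁻¹ on [x, x₀]
      have h1 : x ≤ f⁻¹ x := le_of_lt ((lt_iff_inv_gt f x).mp h)
      have h2 : f⁻¹ x₀ ≤ x₀ := by
        by_contra hh
        push_neg at hh
        have := (lt_iff_inv_gt f x₀).mpr hh
        exact absurd this (not_lt.mpr (le_of_lt hpos))
      obtain ⟨z, hz1, hz2, hz3⟩ := exists_fixed_between f⁻¹ x x₀ hc h1 h2
      have hzfix : f z = z := by
        conv_lhs => rw [← hz3]
        exact f.apply_symm_apply z
      exact hfree z (lt_of_lt_of_le hxu hz1) (lt_of_le_of_lt hz2 hx₀v) hzfix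
    · obtain ⟨z, hz1, hz2, hz3⟩ :=
        exists_fixed_between f x₀ x hc (le_of_lt hpos) (le_of_lt h)
      exact hfree z (lt_of_lt_of_le hx₀u hz1) (lt_of_le_of_lt hz2 hxv) hz3

lemma escape_up (f : HomeoI) (u v : II)
    (hpos : ∀ x, u < x → x < v → x < f x) (hfv : f v = v)
    (x : II) (hxu : u < x) (hxv : x < v) (t : II) (htv : t < v) :
    ∃ n : ℕ, t < (f^n) x := by
  set z : ℕ → II := fun n => (f^n) x with hzdef
  have hinv : ∀ n, u < z n ∧ z n < v := by
    intro n
    induction n with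
    | zero => exact ⟨hxu, hxv⟩
    | succ n ih =>
      constructor
      · have : z n < f (z n) := hpos _ ih.1 ih.2
        have h2 : u < f (z n) := ih.1.trans this
        simpa [hzdef, pow_app_succ] using h2
      · have : f (z n) < f v := f.strictMono ih.2
        rw [hfv] at this
        simpa [hzdef, pow_app_succ] using this
  set s := sSup (range z) with hs
  have hzs : ∀ n, z n ≤ s := fun n => le_sSup ⟨n, rfl⟩
  have hsle : s ≤ f s := by
    refine sSup_le ?_
    rintro w ⟨n, rfl⟩
    have h1 : z n ≤ z (n+1) := le_of_lt (by simpa [hzdef, pow_app_succ] using hpos _ (hinv n).1 (hinv n).2)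
    have h2 : z (n+1) = f (z n) := by simp [hzdef, pow_app_succ]
    calc z n ≤ f (z n) := h1.trans_eq h2
    _ ≤ f s := f.monotone (hzs n)
  have hfss : f s ≤ s := by
    by_contra hlt
    push_neg at hlt
    have : f⁻¹ s < s := (lt_iff_inv_gt f⁻¹ s).mpr (by rwa [inv_inv])
    obtain ⟨w, ⟨n, rfl⟩, hw⟩ := lt_sSup_iff.mp this
    have : s < f (z n) := by
      have := f.strictMono hw
      rwa [apply_inv_apply] at this
    have h2 : f (z n) ≤ s := by
      have h4 := hzs (n+1)
      have h5 : z (n+1) = f (z n) := by simp [hzdef, pow_app_succ]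
      rwa [h5] at h4
    exact absurd (this.trans_le h2) (lt_irrefl s)
  have hsfix : f s = s := le_antisymm hfss hsle
  have hvs : v ≤ s := by
    by_contra hh
    push_neg at hh
    have hus : u < s := hxu.trans_le (hzs 0)
    exact absurd hsfix (ne_of_gt (hpos s hus hh))
  obtain ⟨w, ⟨n, rfl⟩, hw⟩ := lt_sSup_iff.mp (htv.trans_le hvs)
  exact ⟨n, hw⟩

lemma escape_down (f : HomeoI) (u v : II)
    (hneg : ∀ x, u < x → x < v → f x < x) (hfu : f u = u)
    (x : II) (hxu : u < x) (hxv : x < v) (t : II) (htu : u < t) :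
    ∃ n : ℕ, (f^n) x < t := by
  set z : ℕ → II := fun n => (f^n) x with hzdef
  have hinv : ∀ n, u < z n ∧ z n < v := by
    intro n
    induction n with
    | zero => exact ⟨hxu, hxv⟩
    | succ n ih =>
      constructor
      · have : f u < f (z n) := f.strictMono ih.1
        rw [hfu] at this
        simpa [hzdef, pow_app_succ] using this
      · have : f (z n) < z n := hneg _ ih.1 ih.2
        have h2 : f (z n) < v := this.trans ih.2
        simpa [hzdef, pow_app_succ] using h2
  set s := sInf (range z) with hs
  have hzs : ∀ n, s ≤ z n := fun n => sInf_le ⟨n, rfl⟩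
  have hsle : f s ≤ s := by
    refine le_sInf ?_
    rintro w ⟨n, rfl⟩
    have h1 : z (n+1) ≤ z n := le_of_lt (by simpa [hzdef, pow_app_succ] using hneg _ (hinv n).1 (hinv n).2)
    calc f s ≤ f (z n) := f.monotone (hzs n)
    _ = z (n+1) := by simp [hzdef, pow_app_succ]
    _ ≤ z n := h1
  have hfss : s ≤ f s := by
    by_contra hlt
    push_neg at hlt
    have : s < f⁻¹ s := (lt_iff_inv_gt f s).mp hlt
    obtain ⟨w, ⟨n, rfl⟩, hw⟩ := sInf_lt_iff.mp this
    have : f (z n) < s := by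
      have := f.strictMono hw
      rwa [apply_inv_apply] at this
    have h2 : s ≤ f (z n) := by
      have h4 := hzs (n+1)
      have h5 : z (n+1) = f (z n) := by simp [hzdef, pow_app_succ]
      rwa [h5] at h4
    exact absurd (h2.trans_lt this) (lt_irrefl s)
  have hsfix : f s = s := le_antisymm hsle hfss
  have hvs : s ≤ u := by
    by_contra hh
    push_neg at hh
    have hsv : s < v := (hzs 0).trans_lt hxv
    exact absurd hsfix (ne_of_lt (hneg s hh hsv))
  obtain ⟨w, ⟨n, rfl⟩, hw⟩ := sInf_lt_iff.mp (hvs.trans_lt htu)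
  exact ⟨n, hw⟩

/-- Ping-pong lemma for free semigroups. -/
lemma pingpong (F G : HomeoI) (A B : Set II) (x₀ : II)
    (hdisj : ∀ x, x ∈ A → x ∈ B → False) (hxA : x₀ ∉ A) (hxB : x₀ ∉ B)
    (hF : ∀ x, (x ∈ A ∨ x ∈ B ∨ x = x₀) → F x ∈ A)
    (hG : ∀ x, (x ∈ A ∨ x ∈ B ∨ x = x₀) → G x ∈ B) :
    FreeSemigroupPair F G := by
  classical
  set φ : Bool → HomeoI := fun b => if b then F else G with hφ
  set L : FreeSemigroup Bool →ₙ* HomeoI := FreeSemigroup.lift φ with hL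
  have hdec : ∀ (a b : Bool) (t : List Bool),
      FreeSemigroup.mk a (b :: t) = FreeSemigroup.of a * FreeSemigroup.mk b t := by
    intro a b t; rfl
  have claim1 : ∀ (l : List Bool) (a : Bool),
      (L (FreeSemigroup.mk a l)) x₀ ∈ A ∨ (L (FreeSemigroup.mk a l)) x₀ ∈ B := by
    intro l
    induction l with
    | nil =>
      intro a
      have h0 : FreeSemigroup.mk a [] = FreeSemigroup.of a := rfl
      rw [h0, hL, FreeSemigroup.lift_of]
      cases a with
      | true =>
        left
        have : φ true = F := by simp [hφ]
        rw [this]; exact hF x₀ (Or.inr (Or.inr rfl))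
      | false =>
        right
        have : φ false = G := by simp [hφ]
        rw [this]; exact hG x₀ (Or.inr (Or.inr rfl))
    | cons b t ih =>
      intro a
      rw [hdec a b t, map_mul, FreeSemigroup.lift_of, mul_app]
      have hmem : (L (FreeSemigroup.mk b t)) x₀ ∈ A ∨ (L (FreeSemigroup.mk b t)) x₀ ∈ B ∨
          (L (FreeSemigroup.mk b t)) x₀ = x₀ := by
        rcases ih b with h | h
        · exact Or.inl h
        · exact Or.inr (Or.inl h)
      cases a with
      | true =>
        left
        have : φ true = F := by simp [hφ]
        rw [this]; exact hF _ hmem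
      | false =>
        right
        have : φ false = G := by simp [hφ]
        rw [this]; exact hG _ hmem
  have claimT : ∀ (l : List Bool), (L (FreeSemigroup.mk true l)) x₀ ∈ A := by
    intro l
    have h0 : FreeSemigroup.mk true l = FreeSemigroup.of true * FreeSemigroup.mk true l ∨ True :=
      Or.inr trivial
    cases l with
    | nil =>
      have h1 : FreeSemigroup.mk true ([] : List Bool) = FreeSemigroup.of true := rfl
      rw [h1, hL, FreeSemigroup.lift_of]
      have : φ true = F := by simp [hφ]
      rw [this]; exact hF x₀ (Or.inr (Or.inr rfl))
    | cons b t =>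
      rw [hdec, map_mul, FreeSemigroup.lift_of, mul_app]
      have : φ true = F := by simp [hφ]
      rw [this]
      refine hF _ ?_
      rcases claim1 t b with h | h
      · exact Or.inl h
      · exact Or.inr (Or.inl h)
  have claimF : ∀ (l : List Bool), (L (FreeSemigroup.mk false l)) x₀ ∈ B := by
    intro l
    cases l with
    | nil =>
      have h1 : FreeSemigroup.mk false ([] : List Bool) = FreeSemigroup.of false := rfl
      rw [h1, hL, FreeSemigroup.lift_of]
      have : φ false = G := by simp [hφ]
      rw [this]; exact hG x₀ (Or.inr (Or.inr rfl))
    | cons b t =>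
      rw [hdec, map_mul, FreeSemigroup.lift_of, mul_app]
      have : φ false = G := by simp [hφ]
      rw [this]
      refine hG _ ?_
      rcases claim1 t b with h | h
      · exact Or.inl h
      · exact Or.inr (Or.inl h)
  have heads : ∀ (a₁ a₂ : Bool) (l₁ l₂ : List Bool),
      L (FreeSemigroup.mk a₁ l₁) = L (FreeSemigroup.mk a₂ l₂) → a₁ = a₂ := by
    intro a₁ a₂ l₁ l₂ h
    have hval : (L (FreeSemigroup.mk a₁ l₁)) x₀ = (L (FreeSemigroup.mk a₂ l₂)) x₀ := by rw [h]
    cases a₁ with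
    | true =>
      cases a₂ with
      | true => rfl
      | false =>
        exfalso
        have h1 := claimT l₁
        have h2 := claimF l₂
        rw [hval] at h1
        exact hdisj _ h1 h2
    | false =>
      cases a₂ with
      | false => rfl
      | true =>
        exfalso
        have h1 := claimF l₁
        have h2 := claimT l₂
        rw [hval] at h1
        exact hdisj _ h2 h1
  have notone : ∀ (a : Bool) (l : List Bool), L (FreeSemigroup.mk a l) ≠ 1 := by
    intro a l h
    rcases claim1 l a with h1 | h1 <;> rw [h] at h1
    · exact hxA (by rwa [one_app] at h1)
    · exact hxB (by rwa [one_app] at h1)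
  intro w₁ w₂ heq
  obtain ⟨a₁, l₁⟩ := w₁
  obtain ⟨a₂, l₂⟩ := w₂
  have hha := heads a₁ a₂ l₁ l₂ heq
  subst hha
  induction l₁ generalizing a₁ l₂ with
  | nil =>
    cases l₂ with
    | nil => rfl
    | cons c u =>
      exfalso
      rw [hdec a₁ c u, map_mul] at heq
      have h1 : L (FreeSemigroup.mk a₁ []) = L (FreeSemigroup.of a₁) := rfl
      rw [h1] at heq
      have hone : L (FreeSemigroup.mk c u) = 1 := left_eq_mul.mp heq
      exact notone c u hone
  | cons b t ih =>
    cases l₂ with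
    | nil =>
      exfalso
      rw [hdec a₁ b t, map_mul] at heq
      have h1 : L (FreeSemigroup.mk a₁ []) = L (FreeSemigroup.of a₁) := rfl
      rw [h1] at heq
      have hone : L (FreeSemigroup.mk b t) = 1 := left_eq_mul.mp heq.symm
      exact notone b t hone
    | cons c u =>
      rw [hdec a₁ b t, hdec a₁ c u, map_mul, map_mul] at heq
      have heq' : L (FreeSemigroup.mk b t) = L (FreeSemigroup.mk c u) := mul_left_cancel heq
      have hbc : b = c := heads b c t u heq'
      subst hbc
      have := ih b u heq'
      have ht : t = u := by
        have h2 := congrArg FreeSemigroup.tail this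
        simpa using h2
      rw [ht]


/-- Core crossing configuration yields a free semigroup pair. -/
lemma core_crossing (Γ : Subgroup HomeoI) (f g : HomeoI) (hf : f ∈ Γ) (hg : g ∈ Γ)
    (u v : II) (huv : u < v) (hfu : f u = u) (hfv : f v = v)
    (hpos : ∀ x, u < x → x < v → x < f x)
    (hgu : u < g u) (hgv : g v ≤ v) :
    ∃ F ∈ Γ, ∃ G ∈ Γ, FreeSemigroupPair F G := by
  set s₁ := g u with hs₁
  set s₂ := g s₁ with hs₂
  set s₃ := g s₂ with hs₃
  have h01 : s₁ < s₂ := g.strictMono hgu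
  have h12 : s₂ < s₃ := g.strictMono h01
  have hs₁v : s₁ < v := lt_of_lt_of_le (g.strictMono huv) hgv
  have hs₂v : s₂ < v := lt_of_lt_of_le (g.strictMono hs₁v) hgv
  have hs₃v : s₃ < v := lt_of_lt_of_le (g.strictMono hs₂v) hgv
  have hus₁ : u < s₁ := hgu
  -- f⁻¹ dynamics
  have hfinvu : f⁻¹ u = u := fix_inv f u hfu
  have hfinvJ : ∀ x, u < x → x < v → u < f⁻¹ x ∧ f⁻¹ x < v := by
    intro x hxu hxv
    constructor
    · have := f⁻¹.strictMono hxu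
      rwa [hfinvu] at this
    · have := f⁻¹.strictMono hxv
      rwa [show f⁻¹ v = v from fix_inv f v hfv] at this
  have hneg : ∀ x, u < x → x < v → f⁻¹ x < x := by
    intro x hxu hxv
    obtain ⟨h1, h2⟩ := hfinvJ x hxu hxv
    have := hpos (f⁻¹ x) h1 h2
    rwa [apply_inv_apply] at this
  obtain ⟨n, hn⟩ := escape_down f⁻¹ u v hneg hfinvu s₃ (hus₁.trans (h01.trans h12)) hs₃v s₁ hus₁
  -- F = g ∘ f⁻ⁿ , G = g ∘ F
  refine ⟨g * (f⁻¹)^n, mul_mem hg (pow_mem (inv_mem hf) n), g * (g * (f⁻¹)^n),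
    mul_mem hg (mul_mem hg (pow_mem (inv_mem hf) n)), ?_⟩
  -- invariance of (u,v) under (f⁻¹)^n and fixing u
  have hpowJ : ∀ (m : ℕ) (x : II), u < x → x < v → u < ((f⁻¹)^m) x ∧ ((f⁻¹)^m) x < v := by
    intro m x hxu hxv
    induction m with
    | zero => exact ⟨hxu, hxv⟩
    | succ m ih =>
      constructor
      · have h2 := (f⁻¹).strictMono ih.1
        rw [hfinvu] at h2
        rw [pow_app_succ f⁻¹ m x]; exact h2
      · have h2 := (f⁻¹).strictMono ih.2
        rw [show f⁻¹ v = v from fix_inv f v hfv] at h2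
        rw [pow_app_succ f⁻¹ m x]; exact h2
  -- key estimates
  have keyF : ∀ x, s₁ ≤ x → x ≤ s₃ → s₁ < (g * (f⁻¹)^n) x ∧ (g * (f⁻¹)^n) x < s₂ := by
    intro x hx1 hx3
    have hxu : u < x := hus₁.trans_le hx1
    have hxv : x < v := lt_of_le_of_lt hx3 hs₃v
    have hw := hpowJ n x hxu hxv
    have hws : ((f⁻¹)^n) x < s₁ := by
      have hmono : ((f⁻¹)^n) x ≤ ((f⁻¹)^n) s₃ := ((f⁻¹)^n).monotone hx3
      exact lt_of_le_of_lt hmono hn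
    constructor
    · have := g.strictMono hw.1
      rw [mul_app]
      exact this
    · have := g.strictMono hws
      rw [mul_app]
      exact this
  have keyG : ∀ x, s₁ ≤ x → x ≤ s₃ →
      s₂ < (g * (g * (f⁻¹)^n)) x ∧ (g * (g * (f⁻¹)^n)) x < s₃ := by
    intro x hx1 hx3
    obtain ⟨h1, h2⟩ := keyF x hx1 hx3
    constructor
    · have := g.strictMono h1
      rw [mul_app]
      exact this
    · have := g.strictMono h2
      rw [mul_app]
      exact this
  have hrange : ∀ x : II, (x ∈ Ioo s₁ s₂ ∨ x ∈ Ioo s₂ s₃ ∨ x = s₁) → s₁ ≤ x ∧ x ≤ s₃ := by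
    intro x hx
    rcases hx with h | h | h
    · exact ⟨le_of_lt h.1, le_of_lt (h.2.trans h12)⟩
    · exact ⟨le_of_lt (h01.trans h.1), le_of_lt h.2⟩
    · rw [h]; exact ⟨le_rfl, le_of_lt (h01.trans h12)⟩
  apply pingpong (g * (f⁻¹)^n) (g * (g * (f⁻¹)^n)) (Ioo s₁ s₂) (Ioo s₂ s₃) s₁
  · intro x hx1 hx2
    exact absurd (hx1.2.trans hx2.1) (lt_irrefl x)
  · intro h
    exact absurd h.1 (lt_irrefl s₁)
  · intro h
    exact absurd (h01.trans h.1) (lt_irrefl s₁)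
  · intro x hx
    obtain ⟨ha, hb⟩ := hrange x hx
    obtain ⟨h1, h2⟩ := keyF x ha hb
    exact ⟨h1, h2⟩
  · intro x hx
    obtain ⟨ha, hb⟩ := hrange x hx
    obtain ⟨h1, h2⟩ := keyG x ha hb
    exact ⟨h1, h2⟩


lemma coe_lt_coe' {x y : II} : x < y ↔ (x:ℝ) < (y:ℝ) := Subtype.coe_lt_coe.symm

lemma lt_one_coe {x : II} (h : x < 1) : (x:ℝ) < 1 := by
  have := coe_lt_coe'.mp h
  simpa using this

lemma lt_one_of_coe {x : II} (h : (x:ℝ) < 1) : x < 1 := by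
  apply coe_lt_coe'.mpr
  simpa using h

/-- If some interior fixed point of `f` is moved (upward) by `g`, we get a free pair. -/
lemma moved_gives_pair (Γ : Subgroup HomeoI) (f g : HomeoI) (hf : f ∈ Γ) (hg : g ∈ Γ)
    (hfin : (interiorFixedPts f).Finite)
    (p : II) (hfp : f p = p) (hp0 : 0 < (p:ℝ)) (hp1 : (p:ℝ) < 1) (hmv : p < g p) :
    ∃ F ∈ Γ, ∃ G ∈ Γ, FreeSemigroupPair F G := by
  classical
  set R : Set II := {x : II | f x = x ∧ 0 < (x:ℝ) ∧ (x:ℝ) < 1 ∧ x < g x} with hR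
  have hRsub : R ⊆ interiorFixedPts f := fun x hx => ⟨hx.1, hx.2.1, hx.2.2.1⟩
  have hRfin : R.Finite := hfin.subset hRsub
  have hpR : p ∈ R := ⟨hfp, hp0, hp1, hmv⟩
  have hRne : hRfin.toFinset.Nonempty := ⟨p, hRfin.mem_toFinset.mpr hpR⟩
  set u := hRfin.toFinset.max' hRne with hudef
  have hu_mem : u ∈ R := hRfin.mem_toFinset.mp (hRfin.toFinset.max'_mem hRne)
  have hu_max : ∀ x ∈ R, x ≤ u := fun x hx =>
    Finset.le_max' _ x (hRfin.mem_toFinset.mpr hx)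
  set T : Set II := {x : II | f x = x ∧ u < x} with hT
  have hTsub : T ⊆ interiorFixedPts f ∪ {1} := by
    intro x hx
    rcases lt_or_eq_of_le (unitInterval.le_one' : x ≤ 1) with h1 | h1
    · left
      refine ⟨hx.1, ?_, ?_⟩
      · have h0 : (u:ℝ) < (x:ℝ) := coe_lt_coe'.mp hx.2
        exact lt_trans hu_mem.2.1 h0
      · exact lt_one_coe h1
    · right; simp [h1]
  have hTfin : T.Finite := (hfin.union (finite_singleton 1)).subset hTsub
  have h1T : (1 : II) ∈ T := by
    refine ⟨map_one' f, ?_⟩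
    exact coe_lt_coe'.mpr (by simpa using hu_mem.2.2.1)
  have hTne : hTfin.toFinset.Nonempty := ⟨1, hTfin.mem_toFinset.mpr h1T⟩
  set v := hTfin.toFinset.min' hTne with hvdef
  have hv_mem : v ∈ T := hTfin.mem_toFinset.mp (hTfin.toFinset.min'_mem hTne)
  have hv_min : ∀ x ∈ T, v ≤ x := fun x hx =>
    Finset.min'_le _ x (hTfin.mem_toFinset.mpr hx)
  have huv : u < v := hv_mem.2
  have hnofix : ∀ x, u < x → x < v → f x ≠ x := by
    intro x h1 h2 hx
    exact absurd (hv_min x ⟨hx, h1⟩) (not_le.mpr h2)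
  have hgv : g v ≤ v := by
    by_contra hh
    push_neg at hh
    rcases lt_or_eq_of_le (unitInterval.le_one' : v ≤ 1) with h1 | h1
    · have hvR : v ∈ R := by
        refine ⟨hv_mem.1, ?_, lt_one_coe h1, hh⟩
        exact lt_trans hu_mem.2.1 (coe_lt_coe'.mp huv)
      exact absurd (hu_max v hvR) (not_le.mpr huv)
    · rw [h1] at hh
      rw [map_one' g] at hh
      exact absurd hh (lt_irrefl 1)
  have hgu : u < g u := hu_mem.2.2.2
  obtain ⟨w, hw1, hw2⟩ := exists_between huv
  rcases lt_trichotomy w (f w) with hsgn | hsgn | hsgn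
  · exact core_crossing Γ f g hf hg u v huv hu_mem.1 hv_mem.1
      (sign_pos f u v hnofix w hw1 hw2 hsgn) hgu hgv
  · exact absurd hsgn.symm (hnofix w hw1 hw2)
  · have hnofix' : ∀ x, u < x → x < v → f⁻¹ x ≠ x := by
      intro x h1 h2 hx
      have : f x = x := by
        conv_lhs => rw [← hx]
        exact apply_inv_apply f x
      exact hnofix x h1 h2 this
    have hpos' := sign_pos f⁻¹ u v hnofix' w hw1 hw2 ((lt_iff_inv_gt f w).mp hsgn)
    exact core_crossing Γ f⁻¹ g (inv_mem hf) hg u v huv (fix_inv f u hu_mem.1)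
      (fix_inv f v hv_mem.1) hpos' hgu hgv


lemma pow_app_succ' (f : HomeoI) (n : ℕ) (x : II) : (f^(n+1)) x = (f^n) (f x) := by
  rw [pow_succ]; rfl

open Filter Topology in
/-- Hölder-type key lemma: a commutator cannot be above the identity on a gap on which
the group acts freely. -/
lemma holder_key (Γ : Subgroup HomeoI) (u v x₀ : II)
    (hfixu : ∀ γ, γ ∈ Γ → γ u = u) (hfixv : ∀ γ, γ ∈ Γ → γ v = v)
    (hfree : ∀ γ, γ ∈ Γ → γ ≠ 1 → ∀ x, u < x → x < v → γ x ≠ x)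
    (hx₀u : u < x₀) (hx₀v : x₀ < v)
    (f : HomeoI) (hfΓ : f ∈ Γ) (hfpos : ∀ x, u < x → x < v → x < f x)
    (a b : HomeoI) (haΓ : a ∈ Γ) (hbΓ : b ∈ Γ)
    (hcpos : ∀ x, u < x → x < v → x < (a*b*a⁻¹*b⁻¹) x) : False := by
  classical
  have preserve : ∀ γ, γ ∈ Γ → ∀ x, u < x → x < v → u < γ x ∧ γ x < v := by
    intro γ hγ x h1 h2
    constructor
    · have := γ.strictMono h1; rwa [hfixu γ hγ] at this
    · have := γ.strictMono h2; rwa [hfixv γ hγ] at this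
  -- pointwise comparison from comparison at the base point
  have ptle : ∀ γ δ, γ ∈ Γ → δ ∈ Γ → γ x₀ ≤ δ x₀ →
      ∀ x, u < x → x < v → γ x ≤ δ x := by
    intro γ δ hγ hδ hle x hx1 hx2
    by_cases hone : γ⁻¹ * δ = 1
    · have : γ = δ := by
        have h := inv_mul_eq_one.mp hone
        exact h
      rw [this]
    · have hεΓ : γ⁻¹ * δ ∈ Γ := mul_mem (inv_mem hγ) hδ
      have hx₀ε : x₀ ≤ (γ⁻¹ * δ) x₀ := by
        rw [mul_app]
        have := γ⁻¹.monotone hle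
        rwa [inv_apply_apply] at this
      have hlt : x₀ < (γ⁻¹ * δ) x₀ := by
        rcases lt_or_eq_of_le hx₀ε with h | h
        · exact h
        · exact absurd h.symm (hfree _ hεΓ hone x₀ hx₀u hx₀v)
      have hp := sign_pos (γ⁻¹ * δ) u v (hfree _ hεΓ hone) x₀ hx₀u hx₀v hlt
      have hx := hp x hx1 hx2
      rw [mul_app] at hx
      have := γ.strictMono hx
      rw [apply_inv_apply] at this
      exact le_of_lt this
  have ptlt : ∀ γ δ, γ ∈ Γ → δ ∈ Γ → γ x₀ < δ x₀ →
      ∀ x, u < x → x < v → γ x < δ x := by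
    intro γ δ hγ hδ hle x hx1 hx2
    have hone : γ⁻¹ * δ ≠ 1 := by
      intro h
      have : γ = δ := inv_mul_eq_one.mp h
      rw [this] at hle; exact absurd hle (lt_irrefl _)
    have hεΓ : γ⁻¹ * δ ∈ Γ := mul_mem (inv_mem hγ) hδ
    have hlt : x₀ < (γ⁻¹ * δ) x₀ := by
      rw [mul_app]
      have := γ⁻¹.strictMono hle
      rwa [inv_apply_apply] at this
    have hp := sign_pos (γ⁻¹ * δ) u v (hfree _ hεΓ hone) x₀ hx₀u hx₀v hlt
    have hx := hp x hx1 hx2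
    rw [mul_app] at hx
    have := γ.strictMono hx
    rwa [apply_inv_apply] at this
  -- strict monotonicity of k ↦ f^k x₀ over ℤ
  have hmono : StrictMono (fun k : ℤ => (f^k) x₀) := by
    apply strictMono_int_of_lt_succ
    intro k
    have : (f^(k+1) : HomeoI) = f^k * f := zpow_add_one f k
    rw [this, mul_app]
    exact (f^k).strictMono (hfpos x₀ hx₀u hx₀v)
  have hnegf : ∀ x, u < x → x < v → f⁻¹ x < x := by
    intro x h1 h2
    have hfu : f⁻¹ u = u := fix_inv f u (hfixu f hfΓ)
    have hfv : f⁻¹ v = v := fix_inv f v (hfixv f hfΓ)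
    have hJ : u < f⁻¹ x ∧ f⁻¹ x < v := by
      constructor
      · have := f⁻¹.strictMono h1; rwa [hfu] at this
      · have := f⁻¹.strictMono h2; rwa [hfv] at this
    have := hfpos (f⁻¹ x) hJ.1 hJ.2
    rwa [apply_inv_apply] at this
  -- existence of the integer coordinate
  have hKex : ∀ γ : HomeoI, ∃ k : ℤ,
      γ ∈ Γ → ((f^k) x₀ ≤ γ x₀ ∧ γ x₀ < (f^(k+1)) x₀) := by
    intro γ
    by_cases hγ : γ ∈ Γ
    · obtain ⟨hJ1, hJ2⟩ := preserve γ hγ x₀ hx₀u hx₀v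
      obtain ⟨m, hm⟩ := escape_up f u v hfpos (hfixv f hfΓ) x₀ hx₀u hx₀v (γ x₀) hJ2
      obtain ⟨m', hm'⟩ := escape_down f⁻¹ u v hnegf (fix_inv f u (hfixu f hfΓ))
        x₀ hx₀u hx₀v (γ x₀) hJ1
      have hm'' : (f^(-(m' : ℤ))) x₀ < γ x₀ := by
        have : (f^(-(m' : ℤ)) : HomeoI) = (f⁻¹)^m' := by
          rw [zpow_neg, zpow_natCast, inv_pow]
        rw [this]; exact hm'
      have hmN : ∀ z : ℤ, (f^z) x₀ ≤ γ x₀ → z ≤ (m : ℤ) := by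
        intro z hz
        by_contra hzz
        push_neg at hzz
        have : (f^(m:ℤ)) x₀ < (f^z) x₀ := hmono hzz
        have h2 : γ x₀ < (f^z) x₀ := by
          have h3 : (f^(m:ℤ)) x₀ = (f^m) x₀ := by rw [zpow_natCast]
          rw [h3] at this
          exact hm.trans this
        exact absurd hz (not_le.mpr h2)
      obtain ⟨k, hk1, hk2⟩ := Int.exists_greatest_of_bdd ⟨m, hmN⟩
        ⟨-(m' : ℤ), le_of_lt hm''⟩
      refine ⟨k, fun _ => ⟨hk1, ?_⟩⟩
      by_contra hh
      push_neg at hh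
      have := hk2 (k+1) hh
      omega
    · exact ⟨0, fun h => absurd h hγ⟩
  choose K hK using hKex
  have K_le_of : ∀ γ, γ ∈ Γ → ∀ m : ℤ, (f^m) x₀ ≤ γ x₀ → m ≤ K γ := by
    intro γ hγ m hm
    have h2 := (hK γ hγ).2
    have : (f^m) x₀ < (f^(K γ + 1)) x₀ := lt_of_le_of_lt hm h2
    have := hmono.lt_iff_lt.mp this
    omega
  have K_lt_of : ∀ γ, γ ∈ Γ → ∀ m : ℤ, γ x₀ < (f^m) x₀ → K γ < m := by
    intro γ hγ m hm
    have h1 := (hK γ hγ).1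
    have : (f^(K γ)) x₀ < (f^m) x₀ := lt_of_le_of_lt h1 hm
    exact hmono.lt_iff_lt.mp this
  have K_mono : ∀ γ δ, γ ∈ Γ → δ ∈ Γ → γ x₀ ≤ δ x₀ → K γ ≤ K δ := by
    intro γ δ hγ hδ h
    exact K_le_of δ hδ (K γ) ((hK γ hγ).1.trans h)
  have K_one : K 1 = 0 := by
    have h1 : (0 : ℤ) ≤ K 1 := by
      apply K_le_of 1 (one_mem Γ) 0
      rw [zpow_zero]
    have h2 : K 1 < 1 := by
      apply K_lt_of 1 (one_mem Γ) 1
      rw [zpow_one, one_app]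
      exact hfpos x₀ hx₀u hx₀v
    omega
  have K_f_pow : ∀ n : ℕ, K (f^n) = n := by
    intro n
    have hmem : (f^n : HomeoI) ∈ Γ := pow_mem hfΓ n
    have h1 : (n : ℤ) ≤ K (f^n) := by
      apply K_le_of _ hmem
      rw [zpow_natCast]
    have h2 : K (f^n) < (n : ℤ) + 1 := by
      apply K_lt_of _ hmem
      have h4 : ((f^n : HomeoI)) x₀ = (f^((n:ℤ))) x₀ := by rw [zpow_natCast]
      rw [h4]
      exact hmono (lt_add_one (n:ℤ))
    omega
  have lbd : ∀ γ, γ ∈ Γ → ∀ x, u < x → x < v → (f^(K γ)) x ≤ γ x := by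
    intro γ hγ
    exact ptle _ γ (zpow_mem hfΓ _) hγ (hK γ hγ).1
  have ubd : ∀ γ, γ ∈ Γ → ∀ x, u < x → x < v → γ x < (f^(K γ + 1)) x := by
    intro γ hγ
    exact ptlt γ _ hγ (zpow_mem hfΓ _) (hK γ hγ).2
  have Kadd_ge : ∀ γ δ, γ ∈ Γ → δ ∈ Γ → K γ + K δ ≤ K (γ * δ) := by
    intro γ δ hγ hδ
    apply K_le_of _ (mul_mem hγ hδ)
    have hy := preserve _ (zpow_mem hfΓ (K δ)) x₀ hx₀u hx₀v
    calc (f^(K γ + K δ)) x₀ = (f^(K γ)) ((f^(K δ)) x₀) := by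
          rw [zpow_add f]; rfl
    _ ≤ γ ((f^(K δ)) x₀) := lbd γ hγ _ hy.1 hy.2
    _ ≤ γ (δ x₀) := γ.monotone (hK δ hδ).1
    _ = (γ * δ) x₀ := rfl
  have Kadd_le : ∀ γ δ, γ ∈ Γ → δ ∈ Γ → K (γ * δ) ≤ K γ + K δ + 1 := by
    intro γ δ hγ hδ
    have hy := preserve δ hδ x₀ hx₀u hx₀v
    have h1 : (γ * δ) x₀ < (f^(K γ + K δ + 2)) x₀ := by
      calc (γ * δ) x₀ = γ (δ x₀) := rfl
      _ < (f^(K γ + 1)) (δ x₀) := ubd γ hγ _ hy.1 hy.2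
      _ < (f^(K γ + 1)) ((f^(K δ + 1)) x₀) := (f^(K γ + 1)).strictMono (hK δ hδ).2
      _ = (f^(K γ + K δ + 2)) x₀ := by
          have h5 : (f^(K γ + K δ + 2) : HomeoI) = f^(K γ + 1) * f^(K δ + 1) := by
            rw [← zpow_add f]
            congr 1
            ring
          rw [h5, mul_app]
    have := K_lt_of _ (mul_mem hγ hδ) _ h1
    omega
  -- sandwich lemmas
  have Slem : ∀ γ δ, γ ∈ Γ → δ ∈ Γ → (∀ x, u < x → x < v → (δ*γ) x ≤ (γ*δ) x) →
      ∀ (k : ℕ) (x), u < x → x < v → (δ^k) (γ x) ≤ γ ((δ^k) x) := by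
    intro γ δ hγ hδ hcomp k
    induction k with
    | zero => intro x h1 h2; simp [one_app]
    | succ k ih =>
      intro x h1 h2
      have hkx := preserve _ (pow_mem hδ k) x h1 h2
      calc (δ^(k+1)) (γ x) = δ ((δ^k) (γ x)) := pow_app_succ δ k (γ x)
      _ ≤ δ (γ ((δ^k) x)) := δ.monotone (ih x h1 h2)
      _ = (δ*γ) ((δ^k) x) := rfl
      _ ≤ (γ*δ) ((δ^k) x) := hcomp _ hkx.1 hkx.2
      _ = γ ((δ^(k+1)) x) := by rw [mul_app, ← pow_app_succ]
  have Slem' : ∀ γ δ, γ ∈ Γ → δ ∈ Γ → (∀ x, u < x → x < v → (γ*δ) x ≤ (δ*γ) x) →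
      ∀ (k : ℕ) (x), u < x → x < v → γ ((δ^k) x) ≤ (δ^k) (γ x) := by
    intro γ δ hγ hδ hcomp k
    induction k with
    | zero => intro x h1 h2; simp [one_app]
    | succ k ih =>
      intro x h1 h2
      have hkx := preserve _ (pow_mem hδ k) x h1 h2
      calc γ ((δ^(k+1)) x) = γ (δ ((δ^k) x)) := by rw [pow_app_succ]
      _ = (γ*δ) ((δ^k) x) := rfl
      _ ≤ (δ*γ) ((δ^k) x) := hcomp _ hkx.1 hkx.2
      _ = δ (γ ((δ^k) x)) := rfl
      _ ≤ δ ((δ^k) (γ x)) := δ.monotone (ih x h1 h2)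
      _ = (δ^(k+1)) (γ x) := (pow_app_succ δ k (γ x)).symm
  have Alem : ∀ γ δ, γ ∈ Γ → δ ∈ Γ → (∀ x, u < x → x < v → (δ*γ) x ≤ (γ*δ) x) →
      ∀ (n : ℕ) (x), u < x → x < v → ((γ*δ)^n) x ≤ (γ^n) ((δ^n) x) := by
    intro γ δ hγ hδ hcomp n
    induction n with
    | zero => intro x h1 h2; simp [one_app]
    | succ n ih =>
      intro x h1 h2
      have hgd : u < (γ*δ) x ∧ (γ*δ) x < v := preserve _ (mul_mem hγ hδ) x h1 h2
      have hdx : u < δ x ∧ δ x < v := preserve δ hδ x h1 h2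
      calc ((γ*δ)^(n+1)) x = ((γ*δ)^n) ((γ*δ) x) := pow_app_succ' _ n x
      _ ≤ (γ^n) ((δ^n) ((γ*δ) x)) := ih _ hgd.1 hgd.2
      _ = (γ^n) ((δ^n) (γ (δ x))) := rfl
      _ ≤ (γ^n) (γ ((δ^n) (δ x))) := (γ^n).monotone (Slem γ δ hγ hδ hcomp n (δ x) hdx.1 hdx.2)
      _ = (γ^(n+1)) ((δ^(n+1)) x) := by
          rw [pow_app_succ' γ n ((δ^(n+1)) x), pow_app_succ' δ n x]
  have Blem : ∀ γ δ, γ ∈ Γ → δ ∈ Γ → (∀ x, u < x → x < v → (δ*γ) x ≤ (γ*δ) x) →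
      ∀ (n : ℕ) (x), u < x → x < v → (δ^n) ((γ^n) x) ≤ ((γ*δ)^n) x := by
    intro γ δ hγ hδ hcomp n
    induction n with
    | zero => intro x h1 h2; simp [one_app]
    | succ n ih =>
      intro x h1 h2
      have hgn : u < (γ^n) x ∧ (γ^n) x < v := preserve _ (pow_mem hγ n) x h1 h2
      have hS := Slem γ δ hγ hδ hcomp (n+1) ((γ^n) x) hgn.1 hgn.2
      calc (δ^(n+1)) ((γ^(n+1)) x) = (δ^(n+1)) (γ ((γ^n) x)) := by
            rw [pow_app_succ γ n x]
      _ ≤ γ ((δ^(n+1)) ((γ^n) x)) := hS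
      _ = γ (δ ((δ^n) ((γ^n) x))) := by rw [pow_app_succ δ n ((γ^n) x)]
      _ ≤ γ (δ (((γ*δ)^n) x)) := γ.monotone (δ.monotone (ih x h1 h2))
      _ = ((γ*δ)^(n+1)) x := by rw [pow_app_succ (γ*δ) n x]; rfl
  have Alem' : ∀ γ δ, γ ∈ Γ → δ ∈ Γ → (∀ x, u < x → x < v → (γ*δ) x ≤ (δ*γ) x) →
      ∀ (n : ℕ) (x), u < x → x < v → (γ^n) ((δ^n) x) ≤ ((γ*δ)^n) x := by
    intro γ δ hγ hδ hcomp n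
    induction n with
    | zero => intro x h1 h2; simp [one_app]
    | succ n ih =>
      intro x h1 h2
      have hgd : u < (γ*δ) x ∧ (γ*δ) x < v := preserve _ (mul_mem hγ hδ) x h1 h2
      have hdx : u < δ x ∧ δ x < v := preserve δ hδ x h1 h2
      calc (γ^(n+1)) ((δ^(n+1)) x) = (γ^n) (γ ((δ^n) (δ x))) := by
            rw [pow_app_succ' γ n ((δ^(n+1)) x), pow_app_succ' δ n x]
      _ ≤ (γ^n) ((δ^n) (γ (δ x))) := (γ^n).monotone (Slem' γ δ hγ hδ hcomp n (δ x) hdx.1 hdx.2)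
      _ = (γ^n) ((δ^n) ((γ*δ) x)) := rfl
      _ ≤ ((γ*δ)^n) ((γ*δ) x) := ih _ hgd.1 hgd.2
      _ = ((γ*δ)^(n+1)) x := (pow_app_succ' _ n x).symm
  have Blem' : ∀ γ δ, γ ∈ Γ → δ ∈ Γ → (∀ x, u < x → x < v → (γ*δ) x ≤ (δ*γ) x) →
      ∀ (n : ℕ) (x), u < x → x < v → ((γ*δ)^n) x ≤ (δ^n) ((γ^n) x) := by
    intro γ δ hγ hδ hcomp n
    induction n with
    | zero => intro x h1 h2; simp [one_app]
    | succ n ih =>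
      intro x h1 h2
      have hgn : u < (γ^n) x ∧ (γ^n) x < v := preserve _ (pow_mem hγ n) x h1 h2
      have hS := Slem' γ δ hγ hδ hcomp (n+1) ((γ^n) x) hgn.1 hgn.2
      calc ((γ*δ)^(n+1)) x = γ (δ (((γ*δ)^n) x)) := by rw [pow_app_succ (γ*δ) n x]; rfl
      _ ≤ γ (δ ((δ^n) ((γ^n) x))) := γ.monotone (δ.monotone (ih x h1 h2))
      _ = γ ((δ^(n+1)) ((γ^n) x)) := by rw [pow_app_succ δ n ((γ^n) x)]
      _ ≤ (δ^(n+1)) (γ ((γ^n) x)) := hS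
      _ = (δ^(n+1)) ((γ^(n+1)) x) := by rw [pow_app_succ γ n x]
  -- the K-bounds for products, in both cases
  have Kbounds : ∀ γ δ, γ ∈ Γ → δ ∈ Γ → ∀ n : ℕ,
      K (γ^n) + K (δ^n) ≤ K ((γ*δ)^n) ∧ K ((γ*δ)^n) ≤ K (γ^n) + K (δ^n) + 1 := by
    intro γ δ hγ hδ n
    have hγn : (γ^n : HomeoI) ∈ Γ := pow_mem hγ n
    have hδn : (δ^n : HomeoI) ∈ Γ := pow_mem hδ n
    have hγδn : ((γ*δ)^n : HomeoI) ∈ Γ := pow_mem (mul_mem hγ hδ) n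
    rcases le_total ((δ*γ) x₀) ((γ*δ) x₀) with hcase | hcase
    · have hcomp := ptle _ _ (mul_mem hδ hγ) (mul_mem hγ hδ) hcase
      constructor
      · have hB := Blem γ δ hγ hδ hcomp n x₀ hx₀u hx₀v
        have : (δ^n * γ^n) x₀ ≤ ((γ*δ)^n) x₀ := hB
        have h2 := K_mono _ _ (mul_mem hδn hγn) hγδn this
        have h3 := Kadd_ge _ _ hδn hγn
        omega
      · have hA := Alem γ δ hγ hδ hcomp n x₀ hx₀u hx₀v
        have : ((γ*δ)^n) x₀ ≤ (γ^n * δ^n) x₀ := hA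
        have h2 := K_mono _ _ hγδn (mul_mem hγn hδn) this
        have h3 := Kadd_le _ _ hγn hδn
        omega
    · have hcomp := ptle _ _ (mul_mem hγ hδ) (mul_mem hδ hγ) hcase
      constructor
      · have hA := Alem' γ δ hγ hδ hcomp n x₀ hx₀u hx₀v
        have : (γ^n * δ^n) x₀ ≤ ((γ*δ)^n) x₀ := hA
        have h2 := K_mono _ _ (mul_mem hγn hδn) hγδn this
        have h3 := Kadd_ge _ _ hγn hδn
        omega
      · have hB := Blem' γ δ hγ hδ hcomp n x₀ hx₀u hx₀v
        have : ((γ*δ)^n) x₀ ≤ (δ^n * γ^n) x₀ := hB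
        have h2 := K_mono _ _ hγδn (mul_mem hδn hγn) this
        have h3 := Kadd_le _ _ hδn hγn
        omega
  -- translation number
  set tau : HomeoI → ℝ := fun γ =>
    if h : Subadditive (fun n => -(K (γ^n) : ℝ)) then -h.lim else 0 with htau
  have hsub : ∀ γ, γ ∈ Γ → Subadditive (fun n => -(K (γ^n) : ℝ)) := by
    intro γ hγ m n
    have h1 : K (γ^m) + K (γ^n) ≤ K (γ^(m+n)) := by
      rw [pow_add]
      exact Kadd_ge _ _ (pow_mem hγ m) (pow_mem hγ n)
    push_cast
    have : ((K (γ^m) : ℝ) + (K (γ^n) : ℝ)) ≤ (K (γ^(m+n)) : ℝ) := by exact_mod_cast h1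
    linarith
  have aseq_le : ∀ γ, γ ∈ Γ → ∀ n : ℕ, K (γ^n) ≤ n * (K γ + 1) := by
    intro γ hγ n
    induction n with
    | zero => simp [K_one]
    | succ n ih =>
      have h1 : K (γ^(n+1)) ≤ K (γ^n) + K γ + 1 := by
        rw [pow_succ]
        exact Kadd_le _ _ (pow_mem hγ n) hγ
      push_cast
      push_cast at ih
      linarith
  have aseq_ge : ∀ γ, γ ∈ Γ → ∀ n : ℕ, (n : ℤ) * K γ ≤ K (γ^n) := by
    intro γ hγ n
    induction n with
    | zero => simp [K_one]
    | succ n ih =>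
      have h1 : K (γ^n) + K γ ≤ K (γ^(n+1)) := by
        rw [pow_succ]
        exact Kadd_ge _ _ (pow_mem hγ n) hγ
      push_cast
      push_cast at ih
      linarith
  have hbdd : ∀ γ, γ ∈ Γ →
      BddBelow (range fun n : ℕ => (-(K (γ^n) : ℝ)) / n) := by
    intro γ hγ
    refine ⟨min 0 (-((K γ : ℝ) + 1)), ?_⟩
    rintro w ⟨n, rfl⟩
    rcases Nat.eq_zero_or_pos n with hn | hn
    · subst hn
      simp [K_one]
    · have hnpos : (0:ℝ) < n := by exact_mod_cast hn
      have h1 : (K (γ^n) : ℝ) ≤ n * ((K γ : ℝ) + 1) := by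
        have := aseq_le γ hγ n
        exact_mod_cast this
      have h2 : -((K γ : ℝ) + 1) ≤ (-(K (γ^n) : ℝ)) / n := by
        rw [le_div_iff₀ hnpos]
        nlinarith
      exact le_trans (min_le_right _ _) h2
  have htend : ∀ γ, γ ∈ Γ →
      Tendsto (fun n : ℕ => (K (γ^n) : ℝ) / n) atTop (𝓝 (tau γ)) := by
    intro γ hγ
    have hs := hsub γ hγ
    have ht := hs.tendsto_lim (hbdd γ hγ)
    have htau' : tau γ = -hs.lim := by
      rw [htau]
      simp only [dif_pos hs]
    rw [htau']
    have : (fun n : ℕ => (K (γ^n) : ℝ) / n) = fun n : ℕ => -((-(K (γ^n) : ℝ)) / n) := by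
      funext n; ring
    rw [this]
    exact ht.neg
  have tau_unique : ∀ γ, γ ∈ Γ → ∀ L : ℝ,
      Tendsto (fun n : ℕ => (K (γ^n) : ℝ) / n) atTop (𝓝 L) → tau γ = L := by
    intro γ hγ L hL
    exact tendsto_nhds_unique (htend γ hγ) hL
  have tau_f : tau f = 1 := by
    apply tau_unique f hfΓ
    apply Tendsto.congr' _ tendsto_const_nhds
    filter_upwards [eventually_ge_atTop 1] with n hn
    have hnpos : (0:ℝ) < n := by exact_mod_cast hn
    rw [K_f_pow n]
    field_simp
    norm_cast
  have tau_add : ∀ γ δ, γ ∈ Γ → δ ∈ Γ → tau (γ * δ) = tau γ + tau δ := by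
    intro γ δ hγ hδ
    apply tau_unique _ (mul_mem hγ hδ)
    have hlow : Tendsto (fun n : ℕ => (K (γ^n) : ℝ) / n + (K (δ^n) : ℝ) / n)
        atTop (𝓝 (tau γ + tau δ)) := (htend γ hγ).add (htend δ hδ)
    have hup : Tendsto (fun n : ℕ => (K (γ^n) : ℝ) / n + (K (δ^n) : ℝ) / n + 1 / n)
        atTop (𝓝 (tau γ + tau δ)) := by
      have := hlow.add tendsto_one_div_atTop_nhds_zero_nat
      simpa using this
    apply tendsto_of_tendsto_of_tendsto_of_le_of_le' hlow hup
    · filter_upwards [eventually_ge_atTop 1] with n hn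
      have hb := (Kbounds γ δ hγ hδ n).1
      rw [← add_div]
      have hcast : ((K (γ^n) : ℝ) + (K (δ^n) : ℝ)) ≤ (K ((γ*δ)^n) : ℝ) := by
        exact_mod_cast hb
      gcongr
    · filter_upwards [eventually_ge_atTop 1] with n hn
      have hb := (Kbounds γ δ hγ hδ n).2
      rw [← add_div, ← add_div]
      have hcast : (K ((γ*δ)^n) : ℝ) ≤ (K (γ^n) : ℝ) + (K (δ^n) : ℝ) + 1 := by
        exact_mod_cast hb
      gcongr
  have tau_one : tau 1 = 0 := by
    apply tau_unique 1 (one_mem Γ)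
    apply Tendsto.congr' _ tendsto_const_nhds
    filter_upwards with n
    rw [one_pow, K_one]
    simp
  have tau_inv : ∀ γ, γ ∈ Γ → tau γ⁻¹ = -(tau γ) := by
    intro γ hγ
    have h := tau_add γ γ⁻¹ hγ (inv_mem hγ)
    rw [mul_inv_cancel, tau_one] at h
    linarith
  have tau_pow : ∀ γ, γ ∈ Γ → ∀ m : ℕ, tau (γ^m) = m * tau γ := by
    intro γ hγ m
    induction m with
    | zero =>
      rw [pow_zero, tau_one]
      simp
    | succ m ih =>
      rw [pow_succ, tau_add _ _ (pow_mem hγ m) hγ, ih]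
      push_cast
      ring
  have tau_ge_one : ∀ γ, γ ∈ Γ → 1 ≤ K γ → 1 ≤ tau γ := by
    intro γ hγ h1
    apply ge_of_tendsto (htend γ hγ)
    filter_upwards [eventually_ge_atTop 1] with n hn
    have hnpos : (0:ℝ) < n := by exact_mod_cast hn
    have h2 := aseq_ge γ hγ n
    have h3 : (n : ℤ) ≤ K (γ^n) := le_trans (by nlinarith [h1]) h2
    rw [le_div_iff₀ hnpos]
    have : (n:ℝ) ≤ (K (γ^n) : ℝ) := by exact_mod_cast h3
    linarith
  have tau_pos : ∀ γ, γ ∈ Γ → x₀ < γ x₀ → 0 < tau γ := by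
    intro γ hγ hlt
    have hne : γ ≠ 1 := by
      intro h
      rw [h, one_app] at hlt
      exact absurd hlt (lt_irrefl x₀)
    have hγpos := sign_pos γ u v (hfree γ hγ hne) x₀ hx₀u hx₀v hlt
    have hfJ := preserve f hfΓ x₀ hx₀u hx₀v
    obtain ⟨m, hm⟩ := escape_up γ u v hγpos (hfixv γ hγ) x₀ hx₀u hx₀v (f x₀) hfJ.2
    have hm0 : m ≠ 0 := by
      intro h
      subst h
      rw [pow_zero, one_app] at hm
      exact absurd (hfpos x₀ hx₀u hx₀v) (not_lt.mpr (le_of_lt hm))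
    have hK1 : 1 ≤ K (γ^m) := by
      apply K_le_of _ (pow_mem hγ m) 1
      rw [zpow_one]
      exact le_of_lt hm
    have h1 := tau_ge_one _ (pow_mem hγ m) hK1
    rw [tau_pow γ hγ m] at h1
    have hmpos : (0:ℝ) < m := by
      have : 0 < m := Nat.pos_of_ne_zero hm0
      exact_mod_cast this
    nlinarith
  -- endgame
  set c : HomeoI := a*b*a⁻¹*b⁻¹ with hc
  have hcΓ : c ∈ Γ := mul_mem (mul_mem (mul_mem haΓ hbΓ) (inv_mem haΓ)) (inv_mem hbΓ)
  have hczero : tau c = 0 := by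
    have h1 : c = (a*b) * (a⁻¹*b⁻¹) := by rw [hc]; group
    rw [h1, tau_add _ _ (mul_mem haΓ hbΓ) (mul_mem (inv_mem haΓ) (inv_mem hbΓ)),
      tau_add _ _ haΓ hbΓ, tau_add _ _ (inv_mem haΓ) (inv_mem hbΓ),
      tau_inv a haΓ, tau_inv b hbΓ]
    ring
  have hcp : 0 < tau c := tau_pos c hcΓ (hcpos x₀ hx₀u hx₀v)
  rw [hczero] at hcp
  exact absurd hcp (lt_irrefl 0)


lemma holder_comm (Γ : Subgroup HomeoI) (u v : II) (huv : u < v)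
    (hfixu : ∀ γ, γ ∈ Γ → γ u = u) (hfixv : ∀ γ, γ ∈ Γ → γ v = v)
    (hfree : ∀ γ, γ ∈ Γ → γ ≠ 1 → ∀ x, u < x → x < v → γ x ≠ x)
    (a b : HomeoI) (ha : a ∈ Γ) (hb : b ∈ Γ) : a * b = b * a := by
  obtain ⟨x₀, hx₀u, hx₀v⟩ := exists_between huv
  by_contra hne
  have hcne : a*b*a⁻¹*b⁻¹ ≠ 1 := by
    intro h
    apply hne
    open scoped commutatorElement in
    have h2 : ⁅a, b⁆ = 1 := by rw [commutatorElement_def]; exact h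
    exact commutatorElement_eq_one_iff_mul_comm.mp h2
  have hcΓ : a*b*a⁻¹*b⁻¹ ∈ Γ :=
    mul_mem (mul_mem (mul_mem ha hb) (inv_mem ha)) (inv_mem hb)
  have hx : (a*b*a⁻¹*b⁻¹) x₀ ≠ x₀ := hfree _ hcΓ hcne x₀ hx₀u hx₀v
  rcases lt_trichotomy ((a*b*a⁻¹*b⁻¹) x₀) x₀ with h | h | h
  · -- use the inverse commutator
    have hinv : (a*b*a⁻¹*b⁻¹)⁻¹ = b*a*b⁻¹*a⁻¹ := by group
    have hlt : x₀ < (b*a*b⁻¹*a⁻¹) x₀ := by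
      rw [← hinv]
      exact (lt_iff_inv_gt (a*b*a⁻¹*b⁻¹) x₀).mp h
    have hcΓ' : b*a*b⁻¹*a⁻¹ ∈ Γ :=
      mul_mem (mul_mem (mul_mem hb ha) (inv_mem hb)) (inv_mem ha)
    have hcne' : b*a*b⁻¹*a⁻¹ ≠ 1 := by
      rw [← hinv]
      exact inv_ne_one.mpr hcne
    have hpos := sign_pos (b*a*b⁻¹*a⁻¹) u v (hfree _ hcΓ' hcne') x₀ hx₀u hx₀v hlt
    exact holder_key Γ u v x₀ hfixu hfixv hfree hx₀u hx₀v (b*a*b⁻¹*a⁻¹) hcΓ' hpos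
      b a hb ha hpos
  · exact absurd h hx
  · have hpos := sign_pos (a*b*a⁻¹*b⁻¹) u v (hfree _ hcΓ hcne) x₀ hx₀u hx₀v h
    exact holder_key Γ u v x₀ hfixu hfixv hfree hx₀u hx₀v (a*b*a⁻¹*b⁻¹) hcΓ hpos
      a b ha hb hpos

end NavasAux

open NavasAux in
theorem abelian_or_freeSemigroup_of_boundedFix'
    (N : ℕ) (Γ : Subgroup HomeoI)
    (hfix : ∀ f ∈ Γ, f ≠ 1 → (interiorFixedPts f).encard ≤ (N : ℕ∞)) :
    (∀ a b : ↥Γ, a * b = b * a) ∨ ∃ f ∈ Γ, ∃ g ∈ Γ, FreeSemigroupPair f g := by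
  rcases Classical.em (∃ f ∈ Γ, ∃ g ∈ Γ, FreeSemigroupPair f g) with hex | hex
  · exact Or.inr hex
  left
  have hfin : ∀ f, f ∈ Γ → f ≠ 1 → (interiorFixedPts f).Finite := by
    intro f hf hf1
    have h1 := hfix f hf hf1
    have h2 : (interiorFixedPts f).encard ≠ ⊤ := by
      intro h
      rw [h] at h1
      exact absurd (top_le_iff.mp h1) (by simp)
    exact Set.encard_ne_top_iff.mp h2
  -- every interior fixed point of a nontrivial element is fixed by the whole group
  have hQ : ∀ f, f ∈ Γ → f ≠ 1 → ∀ p : II, f p = p → 0 < (p:ℝ) → (p:ℝ) < 1 →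
      ∀ g, g ∈ Γ → g p = p := by
    intro f hf hf1 p hp hp0 hp1 g hg
    by_contra hmv
    rcases lt_trichotomy (g p) p with h | h | h
    · have hlt : p < g⁻¹ p := (lt_iff_inv_gt g p).mp h
      exact hex (moved_gives_pair Γ f g⁻¹ hf (inv_mem hg) (hfin f hf hf1) p hp hp0 hp1 hlt)
    · exact hmv h
    · exact hex (moved_gives_pair Γ f g hf hg (hfin f hf hf1) p hp hp0 hp1 h)
  rcases Classical.em (∀ γ : HomeoI, γ ∈ Γ → γ = 1) with htriv | htriv
  · intro A B
    have hA : A = 1 := Subtype.ext (htriv A.1 A.2)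
    have hB : B = 1 := Subtype.ext (htriv B.1 B.2)
    rw [hA, hB]
  push_neg at htriv
  obtain ⟨f₀, hf₀Γ, hf₀1⟩ := htriv
  have hSfin : (interiorFixedPts f₀ ∪ {(0:II)}).Finite :=
    (hfin f₀ hf₀Γ hf₀1).union (finite_singleton 0)
  have hSne : hSfin.toFinset.Nonempty :=
    ⟨0, hSfin.mem_toFinset.mpr (Or.inr rfl)⟩
  set u := hSfin.toFinset.max' hSne with hudef
  have hu_mem : u ∈ interiorFixedPts f₀ ∪ {(0:II)} :=
    hSfin.mem_toFinset.mp (hSfin.toFinset.max'_mem hSne)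
  have hu_max : ∀ x ∈ interiorFixedPts f₀, x ≤ u := fun x hx =>
    Finset.le_max' _ x (hSfin.mem_toFinset.mpr (Or.inl hx))
  have hu1 : u < 1 := by
    rcases hu_mem with h | h
    · exact lt_one_of_coe h.2.2
    · rw [mem_singleton_iff] at h
      rw [h]
      apply coe_lt_coe'.mpr
      norm_num
  have hfixu' : ∀ γ, γ ∈ Γ → γ u = u := by
    intro γ hγ
    rcases hu_mem with h | h
    · exact hQ f₀ hf₀Γ hf₀1 u h.1 h.2.1 h.2.2 γ hγ
    · rw [mem_singleton_iff] at h
      rw [h]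
      exact map_zero' γ
  have hfixv' : ∀ γ, γ ∈ Γ → γ 1 = 1 := fun γ _ => map_one' γ
  have hfree' : ∀ γ, γ ∈ Γ → γ ≠ 1 → ∀ x, u < x → x < 1 → γ x ≠ x := by
    intro γ hγ hγ1 x hxu hx1 hfx
    have hx0 : 0 < (x:ℝ) := by
      have h1 : (u:ℝ) < (x:ℝ) := coe_lt_coe'.mp hxu
      have h2 : 0 ≤ (u:ℝ) := u.2.1
      linarith
    have hx1' : (x:ℝ) < 1 := lt_one_coe hx1
    have hfx0 : f₀ x = x := hQ γ hγ hγ1 x hfx hx0 hx1' f₀ hf₀Γ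
    have : x ∈ interiorFixedPts f₀ := ⟨hfx0, hx0, hx1'⟩
    exact absurd (hu_max x this) (not_le.mpr hxu)
  intro A B
  apply Subtype.ext
  have := holder_comm Γ u 1 hu1 hfixu' hfixv' hfree' A.1 B.1 A.2 B.2
  simpa using this


/-- For any `N ≥ 0`, a subgroup of `Homeo₊(I)` in which every
non-identity element has at most `N` fixed points in `(0,1)` is either Abelian or
contains a free semigroup on two generators. -/
theorem abelian_or_freeSemigroup_of_boundedFix
    (N : ℕ) (Γ : Subgroup HomeoI)
    (hfix : ∀ f ∈ Γ, f ≠ 1 → (interiorFixedPts f).encard ≤ (N : ℕ∞)) :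
    (∀ a b : ↥Γ, a * b = b * a) ∨ ∃ f ∈ Γ, ∃ g ∈ Γ, FreeSemigroupPair f g :=
  abelian_or_freeSemigroup_of_boundedFix' N Γ hfix

end
end

section
/- Let Γ be a subgroup of Homeo₊(I) such that every non-identity element of Γ has only finitely many fixed points in (0,1). Define f < g if and only if there exists δ > 0 such that f(x) < g(x) for all x ∈ (0,δ). Then < is a strict total order on Γ which is invariant under both left and right multiplication (i.e., Γ is bi-orderable via this order). -/
open Set

noncomputable section

/-- The germ-at-`0⁺` order: `f < g` iff `f(x) < g(x)` on some interval `(0, δ)`. -/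
def germLt (Γ : Subgroup HomeoI) (f g : ↥Γ) : Prop :=
  ∃ δ > (0 : ℝ), ∀ x : ↥unitInterval, 0 < (x : ℝ) → (x : ℝ) < δ →
    (((f : HomeoI) x : ℝ)) < (((g : HomeoI) x : ℝ))

/-- If `a ≠ b` and all nontrivial elements have finitely many interior fixed points, then
`a` and `b` disagree on some interval `(0, δ)` with `δ ≤ 1`. -/
lemma exists_delta_ne (Γ : Subgroup HomeoI)
    (hfix : ∀ f ∈ Γ, f ≠ 1 → (interiorFixedPts f).Finite) (a b : ↥Γ) (hab : a ≠ b) :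
    ∃ δ > (0 : ℝ), δ ≤ 1 ∧ ∀ x : ↥unitInterval, 0 < (x : ℝ) → (x : ℝ) < δ →
      (a : HomeoI) x ≠ (b : HomeoI) x := by
  set k : HomeoI := ((a : HomeoI))⁻¹ * (b : HomeoI) with hk
  have hkΓ : k ∈ Γ := mul_mem (inv_mem a.2) b.2
  have hk1 : k ≠ 1 := by
    intro h
    apply hab
    have : (a : HomeoI) = (b : HomeoI) := by
      have := congrArg (fun z => (a : HomeoI) * z) h
      simpa [hk, mul_assoc] using this.symm
    exact Subtype.ext this
  have hfin : (interiorFixedPts k).Finite := hfix k hkΓ hk1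
  have key : ∀ x : ↥unitInterval, (k x = x ↔ (a : HomeoI) x = (b : HomeoI) x) := by
    intro x
    constructor
    · intro h
      have := congrArg (a : HomeoI) h
      simpa [hk] using this.symm
    · intro h
      show ((a : HomeoI)).symm ((b : HomeoI) x) = x
      rw [← h]; exact (a : HomeoI).symm_apply_apply x
  set T : Set ℝ := (fun x : ↥unitInterval => (x : ℝ)) '' interiorFixedPts k with hT
  have hTfin : T.Finite := hfin.image _
  rcases T.eq_empty_or_nonempty with hTe | hTne
  · refine ⟨1, one_pos, le_refl _, fun x hx0 hx1 hne => ?_⟩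
    have : (x : ℝ) ∈ T := ⟨x, ⟨(key x).2 hne, hx0, hx1⟩, rfl⟩
    rw [hTe] at this; exact this
  · obtain ⟨m, hmT, hmin⟩ := T.exists_min_image id hTfin hTne
    obtain ⟨x₀, hx₀, rfl⟩ := hmT
    refine ⟨(x₀ : ℝ), hx₀.2.1, le_of_lt (lt_of_lt_of_le hx₀.2.2 le_rfl), fun x hx0 hxδ hne => ?_⟩
    have hx1 : (x : ℝ) < 1 := lt_trans hxδ hx₀.2.2
    have : (x : ℝ) ∈ T := ⟨x, ⟨(key x).2 hne, hx0, hx1⟩, rfl⟩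
    exact absurd (hmin _ this) (not_le.2 hxδ)

/-- Continuity + IVT: if two homeomorphisms never agree on `(0,δ)` and `a < b` at one point
of `(0,δ)`, then `a < b` throughout `(0,δ)`. -/
lemma sign_const (a b : HomeoI) (δ : ℝ)
    (hne : ∀ x : ↥unitInterval, 0 < (x : ℝ) → (x : ℝ) < δ → a x ≠ b x)
    (x₀ : ↥unitInterval) (h0 : 0 < (x₀ : ℝ)) (hδ : (x₀ : ℝ) < δ)
    (hlt : (a x₀ : ℝ) < (b x₀ : ℝ)) :
    ∀ x : ↥unitInterval, 0 < (x : ℝ) → (x : ℝ) < δ → (a x : ℝ) < (b x : ℝ) := by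
  set F : ℝ → ℝ := fun t =>
    ((b (projIcc 0 1 zero_le_one t) : ℝ)) - ((a (projIcc 0 1 zero_le_one t) : ℝ)) with hF
  have hFc : Continuous F := by
    apply Continuous.sub
    · exact continuous_subtype_val.comp (b.continuous.comp continuous_projIcc)
    · exact continuous_subtype_val.comp (a.continuous.comp continuous_projIcc)
  have hFx : ∀ x : ↥unitInterval, F (x : ℝ) = (b x : ℝ) - (a x : ℝ) := by
    intro x; simp [hF, projIcc_val zero_le_one x]
  intro x hx0 hxδ
  by_contra hcon
  push_neg at hcon
  have hne' : (a x : ℝ) ≠ (b x : ℝ) := fun h => hne x hx0 hxδ (Subtype.coe_injective h)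
  have hblt : (b x : ℝ) < (a x : ℝ) := lt_of_le_of_ne hcon (Ne.symm hne')
  -- F x < 0 < F x₀ ; IVT gives a zero of F strictly between, contradiction
  have hFxneg : F (x : ℝ) < 0 := by rw [hFx]; linarith
  have hFx₀pos : 0 < F (x₀ : ℝ) := by rw [hFx]; linarith
  have main : ∀ t : ℝ, t ∈ Icc (min (x : ℝ) (x₀ : ℝ)) (max (x : ℝ) (x₀ : ℝ)) → F t ≠ 0 := by
    intro t ht hFt
    have ht0 : 0 < t := lt_of_lt_of_le (lt_min hx0 h0) ht.1
    have htδ : t < δ := lt_of_le_of_lt ht.2 (max_lt hxδ hδ)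
    have ht01 : t ∈ Icc (0 : ℝ) 1 := ⟨le_of_lt ht0,
      le_trans ht.2 (max_le x.2.2 x₀.2.2)⟩
    set y : ↥unitInterval := ⟨t, ht01⟩ with hy
    have : F t = (b y : ℝ) - (a y : ℝ) := by
      simp [hF, projIcc_of_mem zero_le_one ht01, hy]
    have hay : (a y : ℝ) = (b y : ℝ) := by rw [this] at hFt; linarith
    exact hne y ht0 htδ (Subtype.coe_injective hay)
  -- but IVT forces a zero
  rcases le_total (x : ℝ) (x₀ : ℝ) with hle | hle
  · have := intermediate_value_Icc hle hFc.continuousOn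
    have h0mem : (0 : ℝ) ∈ Icc (F (x : ℝ)) (F (x₀ : ℝ)) := ⟨le_of_lt hFxneg, le_of_lt hFx₀pos⟩
    obtain ⟨t, ht, hFt⟩ := this h0mem
    exact main t (by rwa [min_eq_left hle, max_eq_right hle]) hFt
  · have := intermediate_value_Icc' hle hFc.continuousOn
    have h0mem : (0 : ℝ) ∈ Icc (F (x : ℝ)) (F (x₀ : ℝ)) := ⟨le_of_lt hFxneg, le_of_lt hFx₀pos⟩
    obtain ⟨t, ht, hFt⟩ := this h0mem
    exact main t (by rwa [min_eq_right hle, max_eq_left hle]) hFt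

/-- Let `Γ ≤ Homeo₊(I)` be such that every non-identity element has
finitely many fixed points in `(0,1)`.  Then the relation `f < g` iff `f(x) < g(x)` on
some interval `(0,δ)` is a strict total order on `Γ` invariant under both left and right
multiplication, i.e. a bi-order on `Γ`. -/
theorem germOrder_is_biorder
    (Γ : Subgroup HomeoI)
    (hfix : ∀ f ∈ Γ, f ≠ 1 → (interiorFixedPts f).Finite) :
    IsStrictTotalOrder ↥Γ (germLt Γ) ∧
      (∀ h a b : ↥Γ, germLt Γ a b → germLt Γ (h * a) (h * b)) ∧
      (∀ h a b : ↥Γ, germLt Γ a b → germLt Γ (a * h) (b * h)) := by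
  -- a convenient sample point in (0, δ) ∩ (0,1)
  have sample : ∀ δ : ℝ, 0 < δ → ∃ x : ↥unitInterval, 0 < (x : ℝ) ∧ (x : ℝ) < δ := by
    intro δ hδ
    refine ⟨⟨min (δ / 2) (1 / 2), ⟨le_of_lt (lt_min (by linarith) (by norm_num)),
      le_trans (min_le_right _ _) (by norm_num)⟩⟩, ?_, ?_⟩
    · exact lt_min (by linarith) (by norm_num)
    · exact lt_of_le_of_lt (min_le_left _ _) (by linarith)
  have irrefl : ∀ a : ↥Γ, ¬ germLt Γ a a := by
    rintro a ⟨δ, hδ, H⟩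
    obtain ⟨x, hx0, hxδ⟩ := sample δ hδ
    exact lt_irrefl _ (H x hx0 hxδ)
  have trans : ∀ a b c : ↥Γ, germLt Γ a b → germLt Γ b c → germLt Γ a c := by
    rintro a b c ⟨δ₁, hδ₁, H₁⟩ ⟨δ₂, hδ₂, H₂⟩
    exact ⟨min δ₁ δ₂, lt_min hδ₁ hδ₂, fun x hx0 hx =>
      lt_trans (H₁ x hx0 (lt_of_lt_of_le hx (min_le_left _ _)))
        (H₂ x hx0 (lt_of_lt_of_le hx (min_le_right _ _)))⟩
  have trich : ∀ a b : ↥Γ, germLt Γ a b ∨ a = b ∨ germLt Γ b a := by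
    intro a b
    by_cases hab : a = b
    · exact Or.inr (Or.inl hab)
    obtain ⟨δ, hδ, _, hne⟩ := exists_delta_ne Γ hfix a b hab
    obtain ⟨x₀, hx₀0, hx₀δ⟩ := sample δ hδ
    have hne' : ((a : HomeoI) x₀ : ℝ) ≠ ((b : HomeoI) x₀ : ℝ) :=
      fun h => hne x₀ hx₀0 hx₀δ (Subtype.coe_injective h)
    rcases lt_or_gt_of_ne hne' with h | h
    · exact Or.inl ⟨δ, hδ, sign_const (a : HomeoI) (b : HomeoI) δ hne x₀ hx₀0 hx₀δ h⟩
    · refine Or.inr (Or.inr ⟨δ, hδ, sign_const (b : HomeoI) (a : HomeoI) δ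
        (fun x h1 h2 he => hne x h1 h2 he.symm) x₀ hx₀0 hx₀δ h⟩)
  haveI i1 : IsTrichotomous ↥Γ (germLt Γ) :=
    ⟨fun a b h1 h2 => ((trich a b).resolve_left h1).resolve_right h2⟩
  haveI i2 : IsIrrefl ↥Γ (germLt Γ) := ⟨irrefl⟩
  haveI i3 : IsTrans ↥Γ (germLt Γ) := ⟨trans⟩
  refine ⟨{ }, ?_, ?_⟩
  · -- left invariance
    rintro h a b ⟨δ, hδ, H⟩
    refine ⟨δ, hδ, fun x hx0 hxδ => ?_⟩
    have hlt : (a : HomeoI) x < (b : HomeoI) x := H x hx0 hxδ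
    exact (h : HomeoI).strictMono hlt
  · -- right invariance
    rintro h a b ⟨δ, hδ, H⟩
    obtain ⟨y, hy0, hyδ⟩ := sample δ hδ
    refine ⟨(((h : HomeoI)).symm y : ℝ), ?_, fun x hx0 hxδ => ?_⟩
    · have h0 : ((h : HomeoI)).symm 0 = 0 := ((h : HomeoI)).symm.map_bot
      have : ((h : HomeoI)).symm 0 < ((h : HomeoI)).symm y :=
        ((h : HomeoI)).symm.strictMono (show (0 : ↥unitInterval) < y from hy0)
      rw [h0] at this
      exact this
    · have hxlt : x < ((h : HomeoI)).symm y := hxδ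
      have h1 : (h : HomeoI) x < y := by
        have := ((h : HomeoI)).strictMono hxlt
        simpa using this
      have h2 : (0 : ↥unitInterval) < (h : HomeoI) x := by
        have := ((h : HomeoI)).strictMono (show (0 : ↥unitInterval) < x from hx0)
        have e : (h : HomeoI) 0 = 0 := ((h : HomeoI)).map_bot
        rwa [e] at this
      exact H ((h : HomeoI) x) h2 (lt_trans h1 hyδ)
end
end

section
/- Let Γ be an irreducible subgroup of Homeo₊(I) such that every non-identity element of Γ has only finitely many fixed points in (0,1), and suppose some non-identity element of Γ fixes a point of (0,1) (i.e., the action of Γ on (0,1) is not free). Then Γ contains a crossed pair: there exist f, g ∈ Γ and points a < b in [0,1] such that f fixes a and b and has no fixed point in (a,b), while g maps a or b into the open interval (a,b). -/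
open Set

noncomputable section

/-- A subgroup of homeomorphisms of `[0,1]` is irreducible if no point of `(0,1)` is
fixed by every element. -/
def IrreducibleSubgroup (Γ : Subgroup HomeoI) : Prop :=
  ∀ x : ↥unitInterval, 0 < (x : ℝ) → (x : ℝ) < 1 → ∃ f ∈ Γ, f x ≠ x

/-- The pair `(f, g)` is crossed on the interval `(a, b)`: `f` fixes `a` and `b` and has
no fixed point in `(a,b)`, while `g` maps `a` or `b` into the open interval `(a,b)`. -/
def CrossedPair (f g : HomeoI) (a b : ↥unitInterval) : Prop :=
  (a : ℝ) < (b : ℝ) ∧ f a = a ∧ f b = b ∧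
    (∀ x : ↥unitInterval, (a : ℝ) < (x : ℝ) → (x : ℝ) < (b : ℝ) → f x ≠ x) ∧
    (((a : ℝ) < (g a : ℝ) ∧ ((g a : ℝ)) < (b : ℝ)) ∨
      ((a : ℝ) < (g b : ℝ) ∧ ((g b : ℝ)) < (b : ℝ)))

lemma homeoI_map_one (h : HomeoI) : h 1 = 1 := h.map_top

/-- Let `Γ ≤ Homeo₊(I)` be irreducible, with every non-identity element
having finitely many fixed points in `(0,1)`, and suppose some non-identity element of
`Γ` fixes a point of `(0,1)`.  Then `Γ` contains a crossed pair. -/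
theorem crossedPair_of_nonfree
    (Γ : Subgroup HomeoI)
    (hfix : ∀ f ∈ Γ, f ≠ 1 → (interiorFixedPts f).Finite)
    (hirr : IrreducibleSubgroup Γ)
    (hnonfree : ∃ f ∈ Γ, f ≠ 1 ∧ ∃ x : ↥unitInterval,
      0 < (x : ℝ) ∧ (x : ℝ) < 1 ∧ f x = x) :
    ∃ f ∈ Γ, ∃ g ∈ Γ, ∃ a b : ↥unitInterval, CrossedPair f g a b := by
  obtain ⟨f, hfΓ, hf1, x₀, hx0, hx1, hxf⟩ := hnonfree
  have hT : (interiorFixedPts f).Finite := hfix f hfΓ hf1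
  have hne : (interiorFixedPts f).Nonempty := ⟨x₀, hxf, hx0, hx1⟩
  -- `q` : a maximal interior fixed point of `f`
  obtain ⟨q, hqT, hqmax⟩ : ∃ a ∈ interiorFixedPts f, ∀ a' ∈ interiorFixedPts f,
      id a ≤ id a' → id a = id a' := by
    obtain ⟨q, hq, hmax⟩ := Set.Finite.exists_maximal hT hne
    exact ⟨q, hq, fun a' ha' h => le_antisymm h (hmax ha' h)⟩
  obtain ⟨hfq, hq0, hq1⟩ := hqT
  -- the gap `(q, 1)` : no fixed points of `f` strictly between `q` and `1`
  have hgap : ∀ x : ↥unitInterval, (q : ℝ) < (x : ℝ) → (x : ℝ) < 1 → f x ≠ x := by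
    intro x hqx hx1' hfx
    have hxT : x ∈ interiorFixedPts f := ⟨hfx, lt_trans hq0 hqx, hx1'⟩
    have := hqmax x hxT (le_of_lt hqx)
    simp only [id] at this
    rw [this] at hqx; exact lt_irrefl _ hqx
  -- `q` is interior, so some `g ∈ Γ` moves `q`
  obtain ⟨g, hgΓ, hgq⟩ := hirr q hq0 hq1
  have hq1' : q < 1 := Subtype.coe_lt_coe.mp (by rwa [Set.Icc.coe_one])
  rcases lt_or_gt_of_ne (fun h : q = g q => hgq h.symm) with hlt | hgt
  · -- `q < g q` : crossed pair `(f, g)` on `(q, 1)`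
    refine ⟨f, hfΓ, g, hgΓ, q, 1, ?_, hfq, homeoI_map_one f, hgap, ?_⟩
    · rwa [Set.Icc.coe_one]
    · left
      have h2 : g q < 1 := by
        calc g q < g 1 := g.strictMono hq1'
        _ = 1 := homeoI_map_one g
      exact ⟨Subtype.coe_lt_coe.mpr hlt, Subtype.coe_lt_coe.mpr h2⟩
  · -- `g q < q` : crossed pair `(f, g⁻¹)` on `(q, 1)`
    refine ⟨f, hfΓ, g⁻¹, Γ.inv_mem hgΓ, q, 1, ?_, hfq, homeoI_map_one f, hgap, ?_⟩
    · rwa [Set.Icc.coe_one]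
    · left
      have hq_lt : q < g⁻¹ q := by
        have h3 : g.symm (g q) < g.symm q := g.symm.strictMono (Subtype.coe_lt_coe.mp hgt)
        rwa [g.symm_apply_apply] at h3
      have h2 : (g⁻¹ : HomeoI) q < 1 := by
        calc (g⁻¹ : HomeoI) q < (g⁻¹ : HomeoI) 1 := (g⁻¹ : HomeoI).strictMono hq1'
        _ = 1 := homeoI_map_one _
      exact ⟨Subtype.coe_lt_coe.mpr hq_lt, Subtype.coe_lt_coe.mpr h2⟩

end
end

section
/- On the group Aff₊(ℝ), define f < g if and only if f(0) < g(0), or f(0) = g(0) and f(1) < g(1). Then < is a left order on Aff₊(ℝ) which satisfies property (P₁) but is not Archimedean. -/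
/-!
The points `0` and `1` determine an affine map, so `affLt` is the pull-back of the lexicographic
order on `ℝ × ℝ` along `f ↦ (f 0, f 1)`; it is left-invariant because every element of
`Aff₊(ℝ)` is increasing.

For `(P₁)`, an increasing sequence `gⁿ` forces `1 < g`. If `g` fixes `0`, its slope is `> 1`;
the hypothesis on `δ` forces `δ 0 > 0`, and `gⁿ δ gᵏ (0) = slopeⁿ · δ 0` increases to infinity.
Otherwise `g 0 > 0`, and boundedness of `gⁿ` forces the slope below `1`, so `g` has a fixed point
`L > 0`, the limit of the increasing orbit `gᵏ 0`. Then `δ gᵏ 0 > L` for large `k`, and `g⁻¹`,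
which expands away from `L`, pushes `g⁻ⁿ δ gᵏ (0)` to infinity.

The order is not Archimedean: `x ↦ 2x` fixes `0`, so none of its powers exceeds `x ↦ x + 1`.
-/

noncomputable section

/-- `f : ℝ ≃o ℝ` is an orientation-preserving affine map `x ↦ a*x + b`, `a > 0`. -/
def IsAffinePos (f : ℝ ≃o ℝ) : Prop :=
  ∃ a b : ℝ, 0 < a ∧ ∀ x : ℝ, f x = a * x + b

/-- The group `Aff₊(ℝ)` of orientation-preserving affine maps of the real line,
as a subgroup of the group of order-isomorphisms of `ℝ`. -/
def AffPlus : Subgroup (ℝ ≃o ℝ) where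
  carrier := {f | IsAffinePos f}
  one_mem' := ⟨1, 0, one_pos, fun x => by simp⟩
  mul_mem' := by
    rintro f g ⟨a, b, ha, hf⟩ ⟨c, d, hc, hg⟩
    refine ⟨a * c, a * d + b, mul_pos ha hc, fun x => ?_⟩
    have : (f * g) x = f (g x) := rfl
    rw [this, hg, hf]; ring
  inv_mem' := by
    rintro f ⟨a, b, ha, hf⟩
    refine ⟨a⁻¹, -b / a, inv_pos.2 ha, fun x => ?_⟩
    have h1 : f⁻¹ x = f.symm x := rfl
    apply f.injective
    rw [h1, f.apply_symm_apply, hf]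
    field_simp
    ring

variable {G : Type*} [Group G]

/-- The sequence `(s n)_{n ≥ 1}` is (strictly) increasing for the order `lt`. -/
def SeqIncr (lt : G → G → Prop) (s : ℕ → G) : Prop :=
  ∀ n : ℕ, 1 ≤ n → lt (s n) (s (n + 1))

/-- The sequence `(s n)_{n ≥ 1}` is bounded: there is `h` with `h⁻¹ < s n < h`. -/
def SeqBounded (lt : G → G → Prop) (s : ℕ → G) : Prop :=
  ∃ h : G, ∀ n : ℕ, 1 ≤ n → lt h⁻¹ (s n) ∧ lt (s n) h

/-- The sequence `(s n)_{n ≥ 1}` is unbounded from above: it has no upper bound. -/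
def SeqUnboundedAbove (lt : G → G → Prop) (s : ℕ → G) : Prop :=
  ∀ h : G, ∃ n : ℕ, 1 ≤ n ∧ lt h (s n)

/-- Property `(P₁)`: for every `g` such that `(gⁿ)_{n≥1}` is increasing and bounded and
every `δ` for which there is `M` with `δ gᵏ > gᵐ` for all `k, m > M`, for all
sufficiently large `k` either `(gⁿ δ gᵏ)_{n≥1}` or `(g⁻ⁿ δ gᵏ)_{n≥1}` is increasing and
unbounded from above. -/
def PropertyP1 (lt : G → G → Prop) : Prop :=
  ∀ g δ : G,
    SeqIncr lt (fun n => g ^ n) → SeqBounded lt (fun n => g ^ n) →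
    (∃ M : ℕ, ∀ k m : ℕ, M < k → M < m → lt (g ^ m) (δ * g ^ k)) →
    ∃ K : ℕ, ∀ k : ℕ, K ≤ k →
      (SeqIncr lt (fun n => g ^ n * δ * g ^ k) ∧
        SeqUnboundedAbove lt (fun n => g ^ n * δ * g ^ k)) ∨
      (SeqIncr lt (fun n => g⁻¹ ^ n * δ * g ^ k) ∧
        SeqUnboundedAbove lt (fun n => g⁻¹ ^ n * δ * g ^ k))

/-- A left-ordered group is Archimedean if for any elements `f, g > 1` some power of `g`
exceeds `f`. -/
def ArchimedeanOrderLt (lt : G → G → Prop) : Prop :=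
  ∀ f g : G, lt 1 f → lt 1 g → ∃ n : ℕ, lt f (g ^ n)

/-- The order on `Aff₊(ℝ)` comparing first the values at `0`, then the values at `1`. -/
def affLt (f g : ↥AffPlus) : Prop :=
  (f : ℝ ≃o ℝ) 0 < (g : ℝ ≃o ℝ) 0 ∨
    ((f : ℝ ≃o ℝ) 0 = (g : ℝ ≃o ℝ) 0 ∧ (f : ℝ ≃o ℝ) 1 < (g : ℝ ≃o ℝ) 1)

open Filter Function

namespace AffPlus

lemma coe_mul_apply (f g : ↥AffPlus) (x : ℝ) :
    ((f * g : ↥AffPlus) : ℝ ≃o ℝ) x = (f : ℝ ≃o ℝ) ((g : ℝ ≃o ℝ) x) := rfl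

lemma coe_pow_apply (g : ↥AffPlus) (n : ℕ) (x : ℝ) :
    ((g ^ n : ↥AffPlus) : ℝ ≃o ℝ) x = (⇑(g : ℝ ≃o ℝ))^[n] x := by
  induction n generalizing x with
  | zero => rfl
  | succ n ih => rw [pow_succ, coe_mul_apply, ih, iterate_succ_apply]

lemma pow_apply_eq_self {g : ↥AffPlus} {x : ℝ} (h : (g : ℝ ≃o ℝ) x = x) (n : ℕ) :
    ((g ^ n : ↥AffPlus) : ℝ ≃o ℝ) x = x := by
  rw [coe_pow_apply]
  exact iterate_fixed h n

def slope (f : ↥AffPlus) : ℝ := (f : ℝ ≃o ℝ) 1 - (f : ℝ ≃o ℝ) 0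

lemma apply_eq (f : ↥AffPlus) (x : ℝ) : (f : ℝ ≃o ℝ) x = slope f * x + (f : ℝ ≃o ℝ) 0 := by
  obtain ⟨a, b, -, hf⟩ := f.2
  simp only [slope, hf]
  ring

lemma slope_pos (f : ↥AffPlus) : 0 < slope f := sub_pos.2 ((f : ℝ ≃o ℝ).strictMono one_pos)

lemma apply_sub_eq_slope_mul (f : ↥AffPlus) (hf : slope f ≠ 1) (x : ℝ) :
    (f : ℝ ≃o ℝ) x - (f : ℝ ≃o ℝ) 0 / (1 - slope f) =
      slope f * (x - (f : ℝ ≃o ℝ) 0 / (1 - slope f)) := by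
  have : 1 - slope f ≠ 0 := sub_ne_zero.2 hf.symm
  rw [apply_eq f x]
  field_simp
  ring

lemma ext_of_apply_zero_of_apply_one {f g : ↥AffPlus} (h0 : (f : ℝ ≃o ℝ) 0 = (g : ℝ ≃o ℝ) 0)
    (h1 : (f : ℝ ≃o ℝ) 1 = (g : ℝ ≃o ℝ) 1) : f = g := by
  have hslope : slope f = slope g := by rw [slope, slope, h0, h1]
  exact Subtype.ext <| OrderIso.ext <| funext fun x => by rw [apply_eq f, apply_eq g, hslope, h0]

def lexKey (f : ↥AffPlus) : ℝ ×ₗ ℝ := toLex ((f : ℝ ≃o ℝ) 0, (f : ℝ ≃o ℝ) 1)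

lemma lexKey_injective : Injective lexKey := fun f g h => by
  simp only [lexKey, toLex_inj, Prod.mk.injEq] at h
  exact ext_of_apply_zero_of_apply_one h.1 h.2

end AffPlus

open AffPlus

lemma affLt_eq_onFun_lexKey : affLt = ((· < ·) on lexKey) := by
  ext f g
  simp only [onFun, lexKey, Prod.Lex.toLex_lt_toLex]
  rfl

lemma isStrictTotalOrder_affLt : IsStrictTotalOrder ↥AffPlus affLt := by
  rw [affLt_eq_onFun_lexKey]
  exact lexKey_injective.isStrictTotalOrder_onFun (r := (· < ·))

lemma affLt_mul_left (c a b : ↥AffPlus) (h : affLt a b) : affLt (c * a) (c * b) := by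
  simp only [affLt, coe_mul_apply] at h ⊢
  rcases h with h | ⟨h0, h1⟩
  · exact Or.inl ((c : ℝ ≃o ℝ).strictMono h)
  · exact Or.inr ⟨congrArg _ h0, (c : ℝ ≃o ℝ).strictMono h1⟩

lemma affLt.apply_zero_le {f g : ↥AffPlus} (h : affLt f g) : (f : ℝ ≃o ℝ) 0 ≤ (g : ℝ ≃o ℝ) 0 := by
  rcases h with h | ⟨h, -⟩
  exacts [h.le, h.le]

lemma one_lt_of_seqIncr_pow {G : Type*} [Group G] {lt : G → G → Prop}
    (hlt : ∀ c a b, lt a b → lt (c * a) (c * b)) {g : G} (hg : SeqIncr lt (g ^ ·)) : lt 1 g := by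
  simpa [pow_succ] using hlt g⁻¹ _ _ (hg 1 le_rfl)

section AffineDynamics

variable {f : ℝ → ℝ} {a L : ℝ}

lemma iterate_eq (hf : ∀ x, f x - L = a * (x - L)) (n : ℕ) (x : ℝ) :
    f^[n] x = L + a ^ n * (x - L) := by
  induction n with
  | zero => simp
  | succ n ih =>
    rw [iterate_succ_apply', ih, pow_succ']
    linear_combination hf (L + a ^ n * (x - L))

lemma strictMono_iterate_of_one_lt (hf : ∀ x, f x - L = a * (x - L)) (ha : 1 < a) {x : ℝ}
    (hx : L < x) : StrictMono fun n => f^[n] x := fun m n hmn => by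
  simp only [iterate_eq hf]
  gcongr

lemma tendsto_iterate_of_one_lt (hf : ∀ x, f x - L = a * (x - L)) (ha : 1 < a) {x : ℝ}
    (hx : L < x) : Tendsto (fun n => f^[n] x) atTop atTop := by
  simp only [iterate_eq hf]
  exact tendsto_atTop_add_const_left _ L
    ((tendsto_pow_atTop_atTop_of_one_lt ha).atTop_mul_const (sub_pos.2 hx))

lemma strictMono_iterate_of_lt_one (hf : ∀ x, f x - L = a * (x - L)) (ha₀ : 0 < a) (ha : a < 1)
    {x : ℝ} (hx : x < L) : StrictMono fun n => f^[n] x := fun m n hmn => by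
  simp only [iterate_eq hf]
  have := pow_lt_pow_right_of_lt_one₀ ha₀ ha hmn
  nlinarith

lemma tendsto_iterate_of_lt_one (hf : ∀ x, f x - L = a * (x - L)) (ha₀ : 0 ≤ a) (ha : a < 1)
    (x : ℝ) : Tendsto (fun n => f^[n] x) atTop (nhds L) := by
  simp only [iterate_eq hf]
  simpa using ((tendsto_pow_atTop_nhds_zero_of_lt_one ha₀ ha).mul_const (x - L)).const_add L

lemma natCast_mul_le_iterate {b : ℝ} (hb : 0 ≤ b) (hf : ∀ x, 0 ≤ x → x + b ≤ f x) (n : ℕ) :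
    n * b ≤ f^[n] 0 := by
  induction n with
  | zero => simp
  | succ n ih =>
    rw [iterate_succ_apply']
    push_cast
    linarith [hf _ (le_trans (by positivity) ih)]

end AffineDynamics

lemma inv_apply_sub_eq {e : ℝ ≃o ℝ} {a L : ℝ} (ha : a ≠ 0) (he : ∀ x, e x - L = a * (x - L))
    (x : ℝ) : e⁻¹ x - L = a⁻¹ * (x - L) := by
  have := he (e⁻¹ x)
  rw [RelIso.apply_inv_self] at this
  field_simp
  linarith

lemma seqIncr_affLt_of_strictMono {s : ℕ → ↥AffPlus}
    (hs : StrictMono fun n => (s n : ℝ ≃o ℝ) 0) : SeqIncr affLt s :=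
  fun n _ => Or.inl (hs n.lt_succ_self)

lemma seqUnboundedAbove_affLt_of_tendsto {s : ℕ → ↥AffPlus}
    (hs : Tendsto (fun n => (s n : ℝ ≃o ℝ) 0) atTop atTop) : SeqUnboundedAbove affLt s := by
  intro h
  obtain ⟨n, hn, hlt⟩ := ((eventually_ge_atTop 1).and (hs.eventually_gt_atTop _)).exists
  exact ⟨n, hn, Or.inl hlt⟩

lemma seqIncr_unboundedAbove_pow_mul {g : ↥AffPlus} {a L : ℝ}
    (hg : ∀ x, (g : ℝ ≃o ℝ) x - L = a * (x - L)) (ha : 1 < a) {h : ↥AffPlus}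
    (hh : L < (h : ℝ ≃o ℝ) 0) :
    SeqIncr affLt (fun n => g ^ n * h) ∧ SeqUnboundedAbove affLt (fun n => g ^ n * h) := by
  have hval : (fun n => ((g ^ n * h : ↥AffPlus) : ℝ ≃o ℝ) 0) =
      fun n => (⇑(g : ℝ ≃o ℝ))^[n] ((h : ℝ ≃o ℝ) 0) :=
    funext fun n => by rw [coe_mul_apply, coe_pow_apply]
  exact ⟨seqIncr_affLt_of_strictMono (hval ▸ strictMono_iterate_of_one_lt hg ha hh),
    seqUnboundedAbove_affLt_of_tendsto (hval ▸ tendsto_iterate_of_one_lt hg ha hh)⟩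

lemma seqIncr_unboundedAbove_pow_mul_of_apply_zero_eq_zero {g δ : ↥AffPlus}
    (hg0 : (g : ℝ ≃o ℝ) 0 = 0) (hg1 : 1 < (g : ℝ ≃o ℝ) 1)
    (hδ : ∃ M : ℕ, ∀ k m : ℕ, M < k → M < m → affLt (g ^ m) (δ * g ^ k)) (k : ℕ) :
    SeqIncr affLt (fun n => g ^ n * δ * g ^ k) ∧
      SeqUnboundedAbove affLt (fun n => g ^ n * δ * g ^ k) := by
  obtain ⟨M, hM⟩ := hδ
  have hfix : ∀ x, (g : ℝ ≃o ℝ) x - 0 = slope g * (x - 0) := fun x => by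
    rw [apply_eq g x, hg0]; ring
  have hslope : 1 < slope g := by rwa [AffPlus.slope, hg0, sub_zero]
  have hδg : ∀ k x, ((δ * g ^ k : ↥AffPlus) : ℝ ≃o ℝ) x =
      (δ : ℝ ≃o ℝ) ((⇑(g : ℝ ≃o ℝ))^[k] x) := fun k x => by rw [coe_mul_apply, coe_pow_apply]
  have hδ0 : 0 < (δ : ℝ ≃o ℝ) 0 := by
    have hle := (hM (M + 1) (M + 1) M.lt_succ_self M.lt_succ_self).apply_zero_le
    rw [pow_apply_eq_self hg0, hδg, iterate_fixed hg0] at hle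
    refine hle.lt_of_ne fun hδ0 => ?_
    -- `δ gᴹ⁺¹` fixes `0` too, so it must dominate `gᵐ` at `1` for all large `m`
    obtain ⟨m, hMm, hm⟩ := ((eventually_gt_atTop M).and
      ((tendsto_iterate_of_one_lt hfix hslope zero_lt_one).eventually_gt_atTop
        (((δ * g ^ (M + 1) : ↥AffPlus) : ℝ ≃o ℝ) 1))).exists
    rcases hM (M + 1) m M.lt_succ_self hMm with h | ⟨-, h⟩
    · rw [pow_apply_eq_self hg0, hδg, iterate_fixed hg0, ← hδ0] at h
      exact h.false
    · rw [coe_pow_apply] at h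
      exact h.asymm hm
  simpa only [mul_assoc] using seqIncr_unboundedAbove_pow_mul hfix hslope
    (h := δ * g ^ k) (by rwa [hδg, iterate_fixed hg0])

lemma slope_lt_one_of_bddAbove_pow {g : ↥AffPlus} (hg0 : 0 < (g : ℝ ≃o ℝ) 0) {C : ℝ}
    (hC : ∀ n : ℕ, 1 ≤ n → ((g ^ n : ↥AffPlus) : ℝ ≃o ℝ) 0 ≤ C) : slope g < 1 := by
  by_contra! ha
  have hstep : ∀ x, 0 ≤ x → x + (g : ℝ ≃o ℝ) 0 ≤ (g : ℝ ≃o ℝ) x := fun x hx => by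
    rw [apply_eq g x]; nlinarith
  obtain ⟨n, hn, hCn⟩ := ((eventually_ge_atTop 1).and
    ((tendsto_natCast_atTop_atTop.atTop_mul_const hg0).eventually_gt_atTop C)).exists
  have := natCast_mul_le_iterate hg0.le hstep n
  linarith [hC n hn, coe_pow_apply g n 0]

lemma eventually_seqIncr_unboundedAbove_inv_pow_mul_of_apply_zero_pos {g δ : ↥AffPlus}
    (hg0 : 0 < (g : ℝ ≃o ℝ) 0) (hbdd : SeqBounded affLt (fun n => g ^ n))
    (hδ : ∃ M : ℕ, ∀ k m : ℕ, M < k → M < m → affLt (g ^ m) (δ * g ^ k)) :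
    ∀ᶠ k in atTop, SeqIncr affLt (fun n => g⁻¹ ^ n * δ * g ^ k) ∧
      SeqUnboundedAbove affLt (fun n => g⁻¹ ^ n * δ * g ^ k) := by
  obtain ⟨M, hM⟩ := hδ
  obtain ⟨h, hh⟩ := hbdd
  have ha₀ := slope_pos g
  have ha : slope g < 1 := slope_lt_one_of_bddAbove_pow hg0 fun n hn => (hh n hn).2.apply_zero_le
  have hfix := apply_sub_eq_slope_mul g ha.ne
  set L := (g : ℝ ≃o ℝ) 0 / (1 - slope g)
  have hL : 0 < L := div_pos hg0 (sub_pos.2 ha)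
  have hδg : ∀ k, ((δ * g ^ k : ↥AffPlus) : ℝ ≃o ℝ) 0 =
      (δ : ℝ ≃o ℝ) ((⇑(g : ℝ ≃o ℝ))^[k] 0) := fun k => by rw [coe_mul_apply, coe_pow_apply]
  have hle : ∀ k, M < k → L ≤ ((δ * g ^ k : ↥AffPlus) : ℝ ≃o ℝ) 0 := fun k hk =>
    le_of_tendsto (tendsto_iterate_of_lt_one hfix ha₀.le ha 0) <|
      (eventually_gt_atTop M).mono fun m hm => by
        simpa only [coe_pow_apply] using (hM k m hk hm).apply_zero_le
  filter_upwards [eventually_ge_atTop (M + 2)] with k hk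
  have hLk : L < ((δ * g ^ k : ↥AffPlus) : ℝ ≃o ℝ) 0 := by
    refine (hle (M + 1) M.lt_succ_self).trans_lt ?_
    rw [hδg, hδg]
    exact (δ : ℝ ≃o ℝ).strictMono (strictMono_iterate_of_lt_one hfix ha₀ ha hL (by omega))
  simpa only [mul_assoc] using seqIncr_unboundedAbove_pow_mul (g := g⁻¹)
    (inv_apply_sub_eq ha₀.ne' hfix) (one_lt_inv₀ ha₀ |>.2 ha) hLk

lemma propertyP1_affLt : PropertyP1 affLt := by
  intro g δ hincr hbdd hδ
  rcases one_lt_of_seqIncr_pow affLt_mul_left hincr with hg0 | ⟨hg0, hg1⟩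
  · obtain ⟨K, hK⟩ := eventually_atTop.1
      (eventually_seqIncr_unboundedAbove_inv_pow_mul_of_apply_zero_pos hg0 hbdd hδ)
    exact ⟨K, fun k hk => Or.inr (hK k hk)⟩
  · exact ⟨0, fun k _ => Or.inl
      (seqIncr_unboundedAbove_pow_mul_of_apply_zero_eq_zero hg0.symm hg1 hδ k)⟩

lemma not_archimedeanOrderLt_affLt : ¬ ArchimedeanOrderLt affLt := by
  intro h
  let τ : ↥AffPlus := ⟨OrderIso.addRight 1, 1, 1, one_pos, fun x => by simp⟩
  let σ : ↥AffPlus := ⟨OrderIso.mulLeft₀ 2 two_pos, 2, 0, two_pos, fun x => by simp⟩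
  have hσ0 : (σ : ℝ ≃o ℝ) 0 = 0 := by simp [σ]
  obtain ⟨n, hn⟩ := h τ σ (Or.inl (by simp [τ])) (Or.inr ⟨hσ0.symm, by norm_num [σ]⟩)
  have := hn.apply_zero_le
  rw [pow_apply_eq_self hσ0] at this
  norm_num [τ] at this

/-- The order `f < g` iff `f(0) < g(0)`, or `f(0) = g(0)` and
`f(1) < g(1)`, is a left order on `Aff₊(ℝ)` which satisfies property `(P₁)` but is not
Archimedean. -/
theorem affPlus_order_P1_not_archimedean :
    IsStrictTotalOrder ↥AffPlus affLt ∧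
      (∀ c a b : ↥AffPlus, affLt a b → affLt (c * a) (c * b)) ∧
      PropertyP1 affLt ∧ ¬ ArchimedeanOrderLt affLt :=
  ⟨isStrictTotalOrder_affLt, affLt_mul_left, propertyP1_affLt, not_archimedeanOrderLt_affLt⟩

end
end

section
/- The group given by the presentation ⟨t, s, b | tbt⁻¹ = b², sbs⁻¹ = b², ts = st⟩ is isomorphic to the semidirect product ℤ² ⋉ ℤ[1/2], where ℤ[1/2] is the additive group of dyadic rationals, b corresponds to 1 ∈ ℤ[1/2], s and t correspond to the standard generators of ℤ², and each standard generator of ℤ² acts on ℤ[1/2] by multiplication by 2. -/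
noncomputable section

/-- The additive group `ℤ[1/2]` of dyadic rationals, as an additive subgroup of `ℚ`. -/
def DyadicAddSubgroup : AddSubgroup ℚ where
  carrier := {q | ∃ (m : ℤ) (n : ℕ), q = m / 2 ^ n}
  zero_mem' := ⟨0, 0, by norm_num⟩
  add_mem' := by
    rintro a b ⟨m, n, rfl⟩ ⟨m', n', rfl⟩
    refine ⟨m * 2 ^ n' + m' * 2 ^ n, n + n', ?_⟩
    have h1 : ((2 : ℚ) ^ n) ≠ 0 := by positivity
    have h2 : ((2 : ℚ) ^ n') ≠ 0 := by positivity
    push_cast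
    rw [div_add_div _ _ h1 h2, pow_add]
    ring
  neg_mem' := by
    rintro a ⟨m, n, rfl⟩
    exact ⟨-m, n, by push_cast; ring⟩

/-- Doubling, as an automorphism of the additive group of dyadic rationals. -/
def doubling : ↥DyadicAddSubgroup ≃+ ↥DyadicAddSubgroup where
  toFun x := ⟨2 * (x : ℚ), by
    obtain ⟨m, n, h⟩ := x.2
    exact ⟨2 * m, n, by rw [h]; push_cast; ring⟩⟩
  invFun x := ⟨(x : ℚ) / 2, by
    obtain ⟨m, n, h⟩ := x.2
    exact ⟨m, n + 1, by rw [h, pow_succ]; ring⟩⟩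
  left_inv x := by ext; ring
  right_inv x := by ext; ring
  map_add' x y := by ext; push_cast; ring

/-- Doubling as a multiplicative automorphism of `Multiplicative ℤ[1/2]`. -/
def d2 : MulAut (Multiplicative ↥DyadicAddSubgroup) := AddEquiv.toMultiplicative doubling

/-- The action of `ℤ²` on `ℤ[1/2]` where each standard generator acts by
multiplication by `2`. -/
def phiBS : Multiplicative (ℤ × ℤ) →* MulAut (Multiplicative ↥DyadicAddSubgroup) :=
  (zpowersHom _ d2).comp
    (AddMonoidHom.toMultiplicative (AddMonoidHom.fst ℤ ℤ + AddMonoidHom.snd ℤ ℤ))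

/-- The group `Γ = ℤ² ⋉ ℤ[1/2]`. -/
abbrev GammaBS : Type := Multiplicative ↥DyadicAddSubgroup ⋊[phiBS] Multiplicative (ℤ × ℤ)


/-- The relators `t b t⁻¹ b⁻², s b s⁻¹ b⁻², [t,s]` in the free group on
`t = of 0`, `s = of 1`, `b = of 2`. -/
def relsBS : Set (FreeGroup (Fin 3)) :=
  { FreeGroup.of 0 * FreeGroup.of 2 * (FreeGroup.of 0)⁻¹ *
      (FreeGroup.of 2 * FreeGroup.of 2)⁻¹,
    FreeGroup.of 1 * FreeGroup.of 2 * (FreeGroup.of 1)⁻¹ *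
      (FreeGroup.of 2 * FreeGroup.of 2)⁻¹,
    FreeGroup.of 0 * FreeGroup.of 1 * (FreeGroup.of 0)⁻¹ * (FreeGroup.of 1)⁻¹ }

/-- `1 ∈ ℤ[1/2]`. -/
def oneDyadic : ↥DyadicAddSubgroup := ⟨1, 1, 0, by norm_num⟩

namespace BS14

open SemidirectProduct Multiplicative

abbrev P := PresentedGroup relsBS

def T : P := PresentedGroup.of 0
def S : P := PresentedGroup.of 1
def B : P := PresentedGroup.of 2

lemma mk_rel {r : FreeGroup (Fin 3)} (hr : r ∈ relsBS) :
    (QuotientGroup.mk r : P) = 1 :=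
  (QuotientGroup.eq_one_iff r).2 (Subgroup.subset_normalClosure hr)

lemma rel_of_mem {r : FreeGroup (Fin 3)} (hr : r ∈ relsBS) :
    (QuotientGroup.mk r : P) = 1 := mk_rel hr

lemma rel1' : B * B = T * B * T⁻¹ := by
  have h := mk_rel (r := FreeGroup.of 0 * FreeGroup.of 2 * (FreeGroup.of 0)⁻¹ *
      (FreeGroup.of 2 * FreeGroup.of 2)⁻¹) (by left; rfl)
  simp only [QuotientGroup.mk_mul, QuotientGroup.mk_inv] at h
  have : (QuotientGroup.mk (FreeGroup.of 0) : P) = T := rfl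
  rw [this] at h
  have h2 : (QuotientGroup.mk (FreeGroup.of 2) : P) = B := rfl
  rw [h2] at h
  rw [mul_inv_eq_one] at h
  exact h.symm

lemma rel2' : B * B = S * B * S⁻¹ := by
  have h := mk_rel (r := FreeGroup.of 1 * FreeGroup.of 2 * (FreeGroup.of 1)⁻¹ *
      (FreeGroup.of 2 * FreeGroup.of 2)⁻¹) (by right; left; rfl)
  simp only [QuotientGroup.mk_mul, QuotientGroup.mk_inv] at h
  have : (QuotientGroup.mk (FreeGroup.of 1) : P) = S := rfl
  rw [this] at h
  have h2 : (QuotientGroup.mk (FreeGroup.of 2) : P) = B := rfl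
  rw [h2] at h
  rw [mul_inv_eq_one] at h
  exact h.symm

lemma rel3' : T * S = S * T := by
  have h := mk_rel (r := FreeGroup.of 0 * FreeGroup.of 1 * (FreeGroup.of 0)⁻¹ *
      (FreeGroup.of 1)⁻¹) (by right; right; rfl)
  simp only [QuotientGroup.mk_mul, QuotientGroup.mk_inv] at h
  have h0 : (QuotientGroup.mk (FreeGroup.of 0) : P) = T := rfl
  have h1 : (QuotientGroup.mk (FreeGroup.of 1) : P) = S := rfl
  rw [h0, h1] at h
  replace h : T * S * T⁻¹ * S⁻¹ = (1 : P) := h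
  rw [mul_inv_eq_one] at h
  rw [mul_inv_eq_iff_eq_mul] at h
  exact h

lemma commTS : Commute T S := rel3'

/-- `c n = T⁻ⁿ B Tⁿ`. -/
def c (n : ℕ) : P := (T ^ n)⁻¹ * B * T ^ n

lemma c_zero : c 0 = B := by simp [c]

lemma cdouble (n : ℕ) : c (n + 1) * c (n + 1) = c n := by
  calc c (n + 1) * c (n + 1)
      = (T ^ (n + 1))⁻¹ * (B * B) * T ^ (n + 1) := by unfold c; group
    _ = (T ^ (n + 1))⁻¹ * (T * B * T⁻¹) * T ^ (n + 1) := by rw [rel1']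
    _ = (T ^ n)⁻¹ * B * T ^ n := by rw [pow_succ]; group

lemma csq (n : ℕ) : c (n + 1) ^ 2 = c n := by rw [sq]; exact cdouble n

lemma cpow (n k : ℕ) : c n = c (n + k) ^ (2 ^ k) := by
  induction k with
  | zero => simp
  | succ k ih =>
    rw [ih, ← csq (n + k), ← pow_mul, ← add_assoc, pow_succ, mul_comm]

lemma welldef {m m' : ℤ} {n n' : ℕ} (h : m * 2 ^ n' = m' * 2 ^ n) :
    c n ^ m = c n' ^ m' := by
  have e1 : c n ^ m = c (n + n') ^ (m * 2 ^ n') := by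
    rw [cpow n n', ← zpow_natCast (c (n + n')) (2 ^ n'), ← zpow_mul, mul_comm]
    push_cast; ring_nf
  have e2 : c n' ^ m' = c (n + n') ^ (m' * 2 ^ n) := by
    rw [cpow n' n, ← zpow_natCast (c (n' + n)) (2 ^ n), ← zpow_mul, mul_comm, add_comm n' n]
    push_cast; ring_nf
  rw [e1, e2, h]

/-- The map `ℤ[1/2] → P`, `m/2ⁿ ↦ T⁻ⁿ Bᵐ Tⁿ`. -/
def f1 (x : ↥DyadicAddSubgroup) : P :=
  c x.2.choose_spec.choose ^ x.2.choose

lemma f1_spec (x : ↥DyadicAddSubgroup) {m : ℤ} {n : ℕ} (h : (x : ℚ) = m / 2 ^ n) :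
    f1 x = c n ^ m := by
  have hs : (x : ℚ) = x.2.choose / 2 ^ x.2.choose_spec.choose :=
    x.2.choose_spec.choose_spec
  apply welldef
  have h2 : ((x.2.choose : ℚ)) / 2 ^ x.2.choose_spec.choose = m / 2 ^ n := by
    rw [← hs, h]
  rw [div_eq_div_iff (by positivity) (by positivity)] at h2
  exact_mod_cast h2

lemma f1_add (x y : ↥DyadicAddSubgroup) : f1 (x + y) = f1 x * f1 y := by
  obtain ⟨m, n, hx⟩ := x.2
  obtain ⟨m', n', hy⟩ := y.2
  have h1 : ((2 : ℚ) ^ n) ≠ 0 := by positivity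
  have h2 : ((2 : ℚ) ^ n') ≠ 0 := by positivity
  have hxy : ((x + y : ↥DyadicAddSubgroup) : ℚ) =
      ((m * 2 ^ n' + m' * 2 ^ n : ℤ) : ℚ) / 2 ^ (n + n') := by
    push_cast
    rw [hx, hy, pow_add]
    field_simp
    try ring
  have hx2 : (x : ℚ) = ((m * 2 ^ n' : ℤ) : ℚ) / 2 ^ (n + n') := by
    push_cast
    rw [hx, pow_add]
    field_simp
    try ring
  have hy2 : (y : ℚ) = ((m' * 2 ^ n : ℤ) : ℚ) / 2 ^ (n + n') := by
    push_cast
    rw [hy, pow_add]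
    field_simp
    try ring
  rw [f1_spec _ hxy, f1_spec _ hx2, f1_spec _ hy2, zpow_add]

/-- `f1` as a monoid hom on `Multiplicative ℤ[1/2]`. -/
def F1 : Multiplicative ↥DyadicAddSubgroup →* P :=
  MonoidHom.mk' (fun x => f1 x.toAdd) (fun x y => f1_add x.toAdd y.toAdd)

/-- `F2 (p, q) = Tᵖ Sᑫ`. -/
def F2 : Multiplicative (ℤ × ℤ) →* P :=
  MonoidHom.mk' (fun g => T ^ g.toAdd.1 * S ^ g.toAdd.2) (by
    intro a b
    show T ^ (a.toAdd.1 + b.toAdd.1) * S ^ (a.toAdd.2 + b.toAdd.2) = _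
    calc T ^ (a.toAdd.1 + b.toAdd.1) * S ^ (a.toAdd.2 + b.toAdd.2)
        = (T ^ a.toAdd.1 * T ^ b.toAdd.1) * (S ^ a.toAdd.2 * S ^ b.toAdd.2) := by
          rw [zpow_add, zpow_add]
      _ = T ^ a.toAdd.1 * (T ^ b.toAdd.1 * S ^ a.toAdd.2) * S ^ b.toAdd.2 := by group
      _ = T ^ a.toAdd.1 * (S ^ a.toAdd.2 * T ^ b.toAdd.1) * S ^ b.toAdd.2 := by
          rw [(commTS.zpow_zpow b.toAdd.1 a.toAdd.2).eq]
      _ = _ := by group)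

lemma conj_c {u : P} (hu : B * B = u * B * u⁻¹) (hcomm : Commute u T) (n : ℕ) :
    u * c n * u⁻¹ = c n * c n := by
  have h2 : u * (T ^ n)⁻¹ = (T ^ n)⁻¹ * u := ((hcomm.pow_right n).inv_right.eq)
  have h3 : T ^ n * u⁻¹ = u⁻¹ * T ^ n := ((hcomm.pow_right n).inv_left.eq).symm
  calc u * c n * u⁻¹
      = (u * (T ^ n)⁻¹) * B * (T ^ n * u⁻¹) := by unfold c; group
    _ = ((T ^ n)⁻¹ * u) * B * (u⁻¹ * T ^ n) := by rw [h2, h3]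
    _ = (T ^ n)⁻¹ * (u * B * u⁻¹) * T ^ n := by group
    _ = (T ^ n)⁻¹ * (B * B) * T ^ n := by rw [← hu]
    _ = c n * c n := by unfold c; group

lemma conj_c_inv {u : P} (hu : B * B = u * B * u⁻¹) (hcomm : Commute u T) (n : ℕ) :
    u⁻¹ * c n * u = c (n + 1) := by
  have h := conj_c hu hcomm (n + 1)
  rw [cdouble] at h
  rw [← h]
  group

lemma conj_f1 {u : P} (hu : B * B = u * B * u⁻¹) (hcomm : Commute u T) (x : ↥DyadicAddSubgroup) :
    u * f1 x * u⁻¹ = f1 (doubling x) := by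
  obtain ⟨m, n, hx⟩ := x.2
  have hdx : ((doubling x : ↥DyadicAddSubgroup) : ℚ) = ((2 * m : ℤ) : ℚ) / 2 ^ n := by
    show 2 * (x : ℚ) = _
    rw [hx]; push_cast; ring
  rw [f1_spec _ hx, f1_spec _ hdx, ← conj_zpow, conj_c hu hcomm, ← sq,
    ← zpow_natCast (c n) 2, ← zpow_mul]
  norm_num

lemma conj_f1_inv {u : P} (hu : B * B = u * B * u⁻¹) (hcomm : Commute u T) (x : ↥DyadicAddSubgroup) :
    u⁻¹ * f1 x * u = f1 (doubling.symm x) := by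
  obtain ⟨m, n, hx⟩ := x.2
  have hdx : ((doubling.symm x : ↥DyadicAddSubgroup) : ℚ) = (m : ℚ) / 2 ^ (n + 1) := by
    show (x : ℚ) / 2 = _
    rw [hx, pow_succ]; ring
  have : u⁻¹ * f1 x * u = u⁻¹ * c n ^ m * (u⁻¹)⁻¹ := by rw [f1_spec _ hx, inv_inv]
  rw [this, ← conj_zpow, inv_inv, conj_c_inv hu hcomm, f1_spec _ hdx]

lemma d2_apply (x : Multiplicative ↥DyadicAddSubgroup) :
    d2 x = Multiplicative.ofAdd (doubling x.toAdd) := rfl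

lemma d2_symm_apply (x : Multiplicative ↥DyadicAddSubgroup) :
    d2⁻¹ x = Multiplicative.ofAdd (doubling.symm x.toAdd) := rfl

lemma F1_apply (x : Multiplicative ↥DyadicAddSubgroup) : F1 x = f1 x.toAdd := rfl

lemma conj_F1_zpow {u : P} (hu : B * B = u * B * u⁻¹) (hcomm : Commute u T) (k : ℤ)
    (x : Multiplicative ↥DyadicAddSubgroup) :
    u ^ k * F1 x * (u ^ k)⁻¹ = F1 ((d2 ^ k) x) := by
  induction k using Int.induction_on with
  | zero => simp
  | succ k ih =>
    have hstep : d2 ^ ((k : ℤ) + 1) = d2 * d2 ^ (k : ℤ) := by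
      rw [show ((k : ℤ) + 1) = 1 + (k : ℤ) by ring, zpow_add, zpow_one]
    calc u ^ ((k : ℤ) + 1) * F1 x * (u ^ ((k : ℤ) + 1))⁻¹
        = u * (u ^ (k : ℤ) * F1 x * (u ^ (k : ℤ))⁻¹) * u⁻¹ := by
          rw [zpow_add, zpow_one]; group
      _ = u * F1 ((d2 ^ (k : ℤ)) x) * u⁻¹ := by rw [ih]
      _ = F1 ((d2 ^ ((k : ℤ) + 1)) x) := by
          rw [hstep, MulAut.mul_apply, F1_apply, F1_apply,
            conj_f1 hu hcomm, d2_apply]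
          rfl
  | pred k ih =>
    have hstep : d2 ^ (-(k : ℤ) - 1) = d2⁻¹ * d2 ^ (-(k : ℤ)) := by
      rw [show (-(k : ℤ) - 1) = -1 + -(k : ℤ) by ring, zpow_add, zpow_neg_one]
    calc u ^ (-(k : ℤ) - 1) * F1 x * (u ^ (-(k : ℤ) - 1))⁻¹
        = u⁻¹ * (u ^ (-(k : ℤ)) * F1 x * (u ^ (-(k : ℤ)))⁻¹) * u := by
          rw [sub_eq_add_neg, zpow_add, zpow_neg_one]; group
      _ = u⁻¹ * F1 ((d2 ^ (-(k : ℤ))) x) * u := by rw [ih]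
      _ = F1 ((d2 ^ (-(k : ℤ) - 1)) x) := by
          rw [hstep, MulAut.mul_apply, F1_apply, F1_apply,
            conj_f1_inv hu hcomm, d2_symm_apply]
          rfl

lemma huT : B * B = T * B * T⁻¹ := rel1'
lemma huS : B * B = S * B * S⁻¹ := rel2'
lemma hcommT : Commute T T := Commute.refl T
lemma hcommS : Commute S T := commTS.symm

lemma phiBS_eq (p : ℤ × ℤ) : phiBS (Multiplicative.ofAdd p) = d2 ^ (p.1 + p.2) := rfl

lemma phiBS_eq' (g : Multiplicative (ℤ × ℤ)) :
    phiBS g = d2 ^ (g.toAdd.1 + g.toAdd.2) := rfl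

lemma F2_apply (p : ℤ × ℤ) :
    F2 (Multiplicative.ofAdd p) = T ^ p.1 * S ^ p.2 := rfl

lemma F2_apply' (g : Multiplicative (ℤ × ℤ)) :
    F2 g = T ^ g.toAdd.1 * S ^ g.toAdd.2 := rfl

lemma compat :
    ∀ g, F1.comp (phiBS g).toMonoidHom = (MulAut.conj (F2 g)).toMonoidHom.comp F1 := by
  intro g
  ext x
  show F1 ((phiBS g) x) = F2 g * F1 x * (F2 g)⁻¹
  rw [phiBS_eq', F2_apply']
  have hS := conj_F1_zpow huS hcommS g.toAdd.2 x
  have hT := conj_F1_zpow huT hcommT g.toAdd.1 ((d2 ^ g.toAdd.2) x)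
  calc F1 ((d2 ^ (g.toAdd.1 + g.toAdd.2)) x)
      = F1 ((d2 ^ g.toAdd.1) ((d2 ^ g.toAdd.2) x)) := by rw [zpow_add]; rfl
    _ = T ^ g.toAdd.1 * (S ^ g.toAdd.2 * F1 x * (S ^ g.toAdd.2)⁻¹) * (T ^ g.toAdd.1)⁻¹ := by
        rw [hS, hT]
    _ = _ := by group

/-- The homomorphism `Γ →* P`. -/
def Φ : GammaBS →* P := SemidirectProduct.lift F1 F2 compat

def fgen : Fin 3 → GammaBS
  | 0 => inr (Multiplicative.ofAdd ((1, 0) : ℤ × ℤ))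
  | 1 => inr (Multiplicative.ofAdd ((0, 1) : ℤ × ℤ))
  | 2 => inl (Multiplicative.ofAdd oneDyadic)

lemma doubling_one : doubling oneDyadic = oneDyadic + oneDyadic := by
  ext
  show 2 * ((oneDyadic : ℚ)) = (oneDyadic : ℚ) + (oneDyadic : ℚ)
  ring

lemma act_one (p : ℤ × ℤ) (hp : p.1 + p.2 = 1) :
    phiBS (Multiplicative.ofAdd p) (Multiplicative.ofAdd oneDyadic) =
      Multiplicative.ofAdd oneDyadic * Multiplicative.ofAdd oneDyadic := by
  rw [phiBS_eq, hp, zpow_one, d2_apply]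
  show Multiplicative.ofAdd (doubling oneDyadic) = _
  rw [doubling_one, ofAdd_add]

lemma hrels : ∀ r ∈ relsBS, FreeGroup.lift fgen r = 1 := by
  rintro r (rfl | rfl | rfl)
  · simp only [map_mul, map_inv, FreeGroup.lift_apply_of]
    show inr (Multiplicative.ofAdd ((1, 0) : ℤ × ℤ)) * inl (Multiplicative.ofAdd oneDyadic) *
      (inr (Multiplicative.ofAdd ((1, 0) : ℤ × ℤ)))⁻¹ *
      (inl (Multiplicative.ofAdd oneDyadic) * inl (Multiplicative.ofAdd oneDyadic))⁻¹ = 1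
    rw [mul_inv_eq_one, ← map_inv, ← inl_aut, ← map_mul, act_one (1, 0) (by norm_num)]
  · simp only [map_mul, map_inv, FreeGroup.lift_apply_of]
    show inr (Multiplicative.ofAdd ((0, 1) : ℤ × ℤ)) * inl (Multiplicative.ofAdd oneDyadic) *
      (inr (Multiplicative.ofAdd ((0, 1) : ℤ × ℤ)))⁻¹ *
      (inl (Multiplicative.ofAdd oneDyadic) * inl (Multiplicative.ofAdd oneDyadic))⁻¹ = 1
    rw [mul_inv_eq_one, ← map_inv, ← inl_aut, ← map_mul, act_one (0, 1) (by norm_num)]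
  · simp only [map_mul, map_inv, FreeGroup.lift_apply_of]
    show inr (Multiplicative.ofAdd ((1, 0) : ℤ × ℤ)) * inr (Multiplicative.ofAdd ((0, 1) : ℤ × ℤ)) *
      (inr (Multiplicative.ofAdd ((1, 0) : ℤ × ℤ)))⁻¹ *
      (inr (Multiplicative.ofAdd ((0, 1) : ℤ × ℤ)))⁻¹ = 1
    have this1 : (Multiplicative.ofAdd ((1, 0) : ℤ × ℤ)) * Multiplicative.ofAdd ((0, 1) : ℤ × ℤ) *
        (Multiplicative.ofAdd ((1, 0) : ℤ × ℤ))⁻¹ *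
        (Multiplicative.ofAdd ((0, 1) : ℤ × ℤ))⁻¹ = 1 := by
      rw [mul_comm (Multiplicative.ofAdd ((1, 0) : ℤ × ℤ))]
      group
    have key : (inr : Multiplicative (ℤ × ℤ) →* GammaBS)
        (Multiplicative.ofAdd ((1, 0) : ℤ × ℤ) * Multiplicative.ofAdd ((0, 1) : ℤ × ℤ) *
          (Multiplicative.ofAdd ((1, 0) : ℤ × ℤ))⁻¹ *
          (Multiplicative.ofAdd ((0, 1) : ℤ × ℤ))⁻¹) = 1 := by
      rw [this1, map_one]
    rw [map_mul, map_mul, map_mul, map_inv, map_inv] at key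
    exact key

/-- The homomorphism `P →* Γ`. -/
def Ψ : P →* GammaBS := PresentedGroup.toGroup hrels

lemma d2_val (x : Multiplicative ↥DyadicAddSubgroup) :
    (((d2 x).toAdd : ↥DyadicAddSubgroup) : ℚ) = 2 * ((x.toAdd : ↥DyadicAddSubgroup) : ℚ) := rfl

lemma d2_pow_val (n : ℕ) (x : Multiplicative ↥DyadicAddSubgroup) :
    ((((d2 ^ n) x).toAdd : ↥DyadicAddSubgroup) : ℚ) = 2 ^ n * ((x.toAdd : ↥DyadicAddSubgroup) : ℚ) := by
  induction n with
  | zero => simp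
  | succ n ih =>
    rw [pow_succ', MulAut.mul_apply, d2_val, ih, pow_succ]
    ring

lemma d2_zpow_val (k : ℤ) (x : Multiplicative ↥DyadicAddSubgroup) :
    ((((d2 ^ k) x).toAdd : ↥DyadicAddSubgroup) : ℚ) = 2 ^ k * ((x.toAdd : ↥DyadicAddSubgroup) : ℚ) := by
  rcases k with n | n
  · rw [Int.ofNat_eq_coe, zpow_natCast, zpow_natCast]
    exact d2_pow_val n x
  · have hk : (Int.negSucc n) = -((n + 1 : ℕ) : ℤ) := rfl
    rw [hk, zpow_neg, zpow_natCast]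
    set y := ((d2 ^ (n + 1 : ℕ))⁻¹) x with hy
    have hxy : (d2 ^ (n + 1 : ℕ)) y = x := by
      rw [hy]; simp
    have hval := d2_pow_val (n + 1) y
    rw [hxy] at hval
    have h2 : ((2 : ℚ) ^ (n + 1 : ℕ)) ≠ 0 := by positivity
    rw [zpow_neg, zpow_natCast]
    field_simp
    rw [hval]
    ring

lemma valAct (p : ℤ × ℤ) (x : Multiplicative ↥DyadicAddSubgroup) :
    ((phiBS (Multiplicative.ofAdd p) x).toAdd : ℚ) =
      2 ^ (p.1 + p.2) * ((x.toAdd : ↥DyadicAddSubgroup) : ℚ) := by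
  rw [phiBS_eq]
  exact d2_zpow_val (p.1 + p.2) x

lemma Psi_of (x : Fin 3) : Ψ (PresentedGroup.of x) = fgen x :=
  PresentedGroup.toGroup.of hrels

lemma oneDyadic_val : ((oneDyadic : ↥DyadicAddSubgroup) : ℚ) = 1 := rfl

lemma comp1 : Φ.comp Ψ = MonoidHom.id P := by
  apply PresentedGroup.ext
  intro x
  fin_cases x
  · show Φ (Ψ (PresentedGroup.of 0)) = PresentedGroup.of 0
    rw [Psi_of]
    show Φ (inr (Multiplicative.ofAdd ((1, 0) : ℤ × ℤ))) = T
    rw [Φ, SemidirectProduct.lift_inr, F2_apply]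
    simp
  · show Φ (Ψ (PresentedGroup.of 1)) = PresentedGroup.of 1
    rw [Psi_of]
    show Φ (inr (Multiplicative.ofAdd ((0, 1) : ℤ × ℤ))) = S
    rw [Φ, SemidirectProduct.lift_inr, F2_apply]
    simp
  · show Φ (Ψ (PresentedGroup.of 2)) = PresentedGroup.of 2
    rw [Psi_of]
    show Φ (inl (Multiplicative.ofAdd oneDyadic)) = B
    rw [Φ, SemidirectProduct.lift_inl]
    rw [F1_apply]
    have h1 : ((oneDyadic : ↥DyadicAddSubgroup) : ℚ) = ((1 : ℤ) : ℚ) / 2 ^ (0 : ℕ) := by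
      rw [oneDyadic_val]; norm_num
    rw [show (Multiplicative.ofAdd oneDyadic).toAdd = oneDyadic from rfl]
    rw [f1_spec _ h1, zpow_one, c_zero]

lemma t1_pow_inv (n : ℕ) :
    ((Multiplicative.ofAdd ((1, 0) : ℤ × ℤ)) ^ n)⁻¹ =
      Multiplicative.ofAdd ((-(n : ℤ), 0) : ℤ × ℤ) := by
  rw [← ofAdd_nsmul, ← ofAdd_neg]
  congr 1
  ext
  · simp
  · simp

lemma Psi_cn (n : ℕ) : Ψ (c n) =
    inl ((phiBS (Multiplicative.ofAdd ((-(n : ℤ), 0) : ℤ × ℤ)))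
      (Multiplicative.ofAdd oneDyadic)) := by
  set g : Multiplicative (ℤ × ℤ) := Multiplicative.ofAdd ((-(n : ℤ), 0) : ℤ × ℤ) with hg
  show Ψ ((T ^ n)⁻¹ * B * T ^ n) = _
  have hT : Ψ T = inr (Multiplicative.ofAdd ((1, 0) : ℤ × ℤ)) := Psi_of 0
  have hB : Ψ B = inl (Multiplicative.ofAdd oneDyadic) := Psi_of 2
  have h1 : Ψ (T ^ n) = (inr : Multiplicative (ℤ × ℤ) →* GammaBS) (g⁻¹) := by
    rw [map_pow, hT, ← map_pow (inr : Multiplicative (ℤ × ℤ) →* GammaBS), hg, ← t1_pow_inv,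
      inv_inv]
  rw [map_mul, map_mul, map_inv, h1, hB,
    map_inv (inr : Multiplicative (ℤ × ℤ) →* GammaBS), inv_inv,
    ← map_inv (inr : Multiplicative (ℤ × ℤ) →* GammaBS) g]
  exact (inl_aut g (Multiplicative.ofAdd oneDyadic)).symm

lemma Psi_F1 (a : Multiplicative ↥DyadicAddSubgroup) : Ψ (F1 a) = inl a := by
  obtain ⟨m, n, hx⟩ := a.toAdd.2
  rw [F1_apply, f1_spec _ hx, map_zpow, Psi_cn, ← map_zpow]
  congr 1
  set w := (phiBS (Multiplicative.ofAdd ((-(n : ℤ), 0) : ℤ × ℤ)))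
    (Multiplicative.ofAdd oneDyadic) with hw
  have hwval : ((w.toAdd : ↥DyadicAddSubgroup) : ℚ) = 2 ^ (-(n : ℤ)) := by
    rw [hw, valAct]
    simp [oneDyadic_val]
  have : (w ^ m).toAdd = a.toAdd := by
    apply Subtype.ext
    rw [toAdd_zpow]
    have hsm : ((m • w.toAdd : ↥DyadicAddSubgroup) : ℚ) = m * ((w.toAdd : ↥DyadicAddSubgroup) : ℚ) := by
      push_cast
      rw [zsmul_eq_mul]
    rw [hsm, hwval, hx, zpow_neg, zpow_natCast]
    exact (div_eq_mul_inv _ _).symm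
  calc w ^ m = Multiplicative.ofAdd ((w ^ m).toAdd) := rfl
    _ = Multiplicative.ofAdd a.toAdd := by rw [this]
    _ = a := rfl

lemma s1_zpow (q : ℤ) :
    (Multiplicative.ofAdd ((0, 1) : ℤ × ℤ)) ^ q =
      Multiplicative.ofAdd ((0, q) : ℤ × ℤ) := by
  rw [← ofAdd_zsmul]
  congr 1
  ext
  · simp
  · simp

lemma t1_zpow (p : ℤ) :
    (Multiplicative.ofAdd ((1, 0) : ℤ × ℤ)) ^ p =
      Multiplicative.ofAdd ((p, 0) : ℤ × ℤ) := by
  rw [← ofAdd_zsmul]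
  congr 1
  ext
  · simp
  · simp

lemma Psi_F2 (g : Multiplicative (ℤ × ℤ)) : Ψ (F2 g) = inr g := by
  have hT : Ψ T = inr (Multiplicative.ofAdd ((1, 0) : ℤ × ℤ)) := Psi_of 0
  have hS : Ψ S = inr (Multiplicative.ofAdd ((0, 1) : ℤ × ℤ)) := Psi_of 1
  have h1 : Ψ (F2 g) =
      (inr : Multiplicative (ℤ × ℤ) →* GammaBS)
        ((Multiplicative.ofAdd ((1, 0) : ℤ × ℤ)) ^ g.toAdd.1 *
          (Multiplicative.ofAdd ((0, 1) : ℤ × ℤ)) ^ g.toAdd.2) := by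
    rw [F2_apply', map_mul, map_zpow Ψ T g.toAdd.1, map_zpow Ψ S g.toAdd.2, hT, hS,
      map_mul, map_zpow (inr : Multiplicative (ℤ × ℤ) →* GammaBS),
      map_zpow (inr : Multiplicative (ℤ × ℤ) →* GammaBS)]
  rw [h1, t1_zpow, s1_zpow, ← ofAdd_add]
  congr 1
  have h2 : ((g.toAdd.1, (0 : ℤ)) + ((0 : ℤ), g.toAdd.2) : ℤ × ℤ) = g.toAdd := by
    ext
    · simp
    · simp
  rw [h2]
  rfl

lemma comp2 : Ψ.comp Φ = MonoidHom.id GammaBS := by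
  apply SemidirectProduct.hom_ext
  · apply MonoidHom.ext
    intro a
    show Ψ (Φ (inl a)) = inl a
    rw [Φ, SemidirectProduct.lift_inl]
    exact Psi_F1 a
  · apply MonoidHom.ext
    intro g
    show Ψ (Φ (inr g)) = inr g
    rw [Φ, SemidirectProduct.lift_inr]
    exact Psi_F2 g

/-- The isomorphism. -/
def e : P ≃* GammaBS := MonoidHom.toMulEquiv Ψ Φ comp1 comp2

lemma e_apply (x : P) : e x = Ψ x := rfl

end BS14

/-- The group presented by
`⟨t, s, b ∣ t b t⁻¹ = b², s b s⁻¹ = b², t s = s t⟩` is isomorphic to the semidirect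
product `ℤ² ⋉ ℤ[1/2]` (each standard generator of `ℤ²` acting on the additive group of
dyadic rationals by multiplication by `2`), with `b` corresponding to `1 ∈ ℤ[1/2]` and
`t`, `s` corresponding to the standard generators of `ℤ²`. -/
theorem presentedGroup_iso_semidirect :
    (∀ p : ℤ × ℤ, ∀ x : Multiplicative ↥DyadicAddSubgroup,
      ((phiBS (Multiplicative.ofAdd p) x).toAdd : ℚ) =
        2 ^ (p.1 + p.2) * ((x.toAdd : ↥DyadicAddSubgroup) : ℚ)) ∧
    ∃ e : PresentedGroup relsBS ≃* GammaBS,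
      e (PresentedGroup.of 2) =
          SemidirectProduct.inl (Multiplicative.ofAdd oneDyadic) ∧
      e (PresentedGroup.of 0) =
          SemidirectProduct.inr (Multiplicative.ofAdd ((1, 0) : ℤ × ℤ)) ∧
      e (PresentedGroup.of 1) =
          SemidirectProduct.inr (Multiplicative.ofAdd ((0, 1) : ℤ × ℤ)) := by
  constructor
  · exact fun p x => BS14.valAct p x
  · refine ⟨BS14.e, ?_, ?_, ?_⟩
    · rw [BS14.e_apply]; exact BS14.Psi_of 2
    · rw [BS14.e_apply]; exact BS14.Psi_of 0
    · rw [BS14.e_apply]; exact BS14.Psi_of 1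

end
end

section
/- The group Γ = ℤ² ⋉ ℤ[1/2], where each standard generator of ℤ² acts on the additive group ℤ[1/2] by multiplication by 2, is not isomorphic to any subgroup of Aff₊(ℝ). -/
noncomputable section

/-!
In `Aff₊(ℝ)` the slope is multiplicative and positive, so a relation `a t a⁻¹ = t²` with `t ≠ 1`
forces `t` to be a nontrivial translation and then `a` to have slope `2`. In `Γ` the two generators
`a`, `b` of `ℤ²` both satisfy this relation with `t = 1 ∈ ℤ[1/2]`, so their images are commuting
affine maps of slope `2`; such maps share their fixed point, hence coincide, contradicting
injectivity since `a ≠ b`.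
-/

open SemidirectProduct Multiplicative

section Affine

variable {f g : ℝ ≃o ℝ} {a b c d : ℝ}

lemma slope_eq_two_of_semiconjBy_sq (hf : ∀ x, f x = a * x + b) (hg : ∀ x, g x = c * x + d)
    (ha : 0 < a) (hc : 0 < c) (hf₁ : f ≠ 1) (h : SemiconjBy g f (f * f)) : c = 2 := by
  have h₀ := DFunLike.congr_fun h 0
  have h₁ := DFunLike.congr_fun h 1
  simp only [RelIso.mul_apply, hf, hg] at h₀ h₁
  have ha₁ : a = 1 := by
    have : a * c * (a - 1) = 0 := by linarith
    rcases mul_eq_zero.mp this with h | h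
    · nlinarith
    · linarith
  have hb : b ≠ 0 := by
    rintro rfl
    exact hf₁ (RelIso.ext fun x => by simp [hf, ha₁])
  subst ha₁
  exact mul_right_cancel₀ hb (by linarith)

lemma eq_of_commute_of_slope_ne_one (hf : ∀ x, f x = c * x + b) (hg : ∀ x, g x = c * x + d)
    (hc : c ≠ 1) (h : Commute f g) : f = g := by
  have h₀ := DFunLike.congr_fun h.eq 0
  simp only [RelIso.mul_apply, hf, hg] at h₀
  have hbd : b = d := by
    have : (c - 1) * (d - b) = 0 := by linarith
    rcases mul_eq_zero.mp this with h | h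
    · exact absurd (sub_eq_zero.mp h) hc
    · linarith
  exact RelIso.ext fun x => by rw [hf, hg, hbd]

end Affine

lemma eq_of_semiconjBy_sq_of_commute {G : Type*} [Group G] {φ : G →* ℝ ≃o ℝ}
    (hφ : Function.Injective φ) (hφ_aff : ∀ γ, IsAffinePos (φ γ)) {t a b : G} (ht : t ≠ 1)
    (ha : SemiconjBy a t (t * t)) (hb : SemiconjBy b t (t * t)) (hab : Commute a b) : a = b := by
  obtain ⟨α, _, hα, hφt⟩ := hφ_aff t
  obtain ⟨A, _, hA, hφa⟩ := hφ_aff a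
  obtain ⟨B, _, hB, hφb⟩ := hφ_aff b
  have hφt₁ : φ t ≠ 1 := fun h => ht (hφ (h.trans (map_one φ).symm))
  have hA₂ := slope_eq_two_of_semiconjBy_sq hφt hφa hα hA hφt₁ (by simpa using ha.map φ)
  have hB₂ := slope_eq_two_of_semiconjBy_sq hφt hφb hα hB hφt₁ (by simpa using hb.map φ)
  subst hA₂ hB₂
  exact hφ (eq_of_commute_of_slope_ne_one hφa hφb (by norm_num) (hab.map φ))

lemma d2_apply (x : Multiplicative ↥DyadicAddSubgroup) : d2 x = x * x :=
  Subtype.ext (two_mul (x.toAdd : ℚ))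

namespace GammaBS

def t : GammaBS := inl (ofAdd ⟨1, 1, 0, by norm_num⟩)

def a : GammaBS := inr (ofAdd (1, 0))

def b : GammaBS := inr (ofAdd (0, 1))

lemma semiconjBy_inr_inl_of_phiBS_eq {g : Multiplicative (ℤ × ℤ)} (hg : phiBS g = d2)
    (n : Multiplicative ↥DyadicAddSubgroup) :
    SemiconjBy (inr g : GammaBS) (inl n) (inl n * inl n) := by
  rw [SemiconjBy, ← mul_inv_eq_iff_eq_mul, ← map_inv, ← inl_aut, hg, d2_apply, map_mul]

lemma semiconjBy_a_t : SemiconjBy a t (t * t) :=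
  semiconjBy_inr_inl_of_phiBS_eq (by simp [phiBS]) _

lemma semiconjBy_b_t : SemiconjBy b t (t * t) :=
  semiconjBy_inr_inl_of_phiBS_eq (by simp [phiBS]) _

lemma commute_a_b : Commute a b :=
  (Commute.all _ _).map inr

lemma t_ne_one : t ≠ 1 := by
  rw [t, ← map_one inl, inl_injective.ne_iff]
  intro h
  simpa using congrArg (fun x : Multiplicative ↥DyadicAddSubgroup => (x.toAdd : ℚ)) h

lemma a_ne_b : a ≠ b := by
  rw [a, b, inr_injective.ne_iff]
  simp

end GammaBS

/-- The group `Γ = ℤ² ⋉ ℤ[1/2]`, where each standard generator of `ℤ²`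
acts on the additive group of dyadic rationals by multiplication by `2`, is not
isomorphic to any subgroup of `Aff₊(ℝ)`, the group of orientation-preserving affine maps
of the real line. -/
theorem gammaBS_not_affine :
    ¬ ∃ φ : GammaBS →* (ℝ ≃o ℝ),
        Function.Injective φ ∧ ∀ γ : GammaBS, IsAffinePos (φ γ) := by
  rintro ⟨φ, hφ, hφ_aff⟩
  exact GammaBS.a_ne_b <| eq_of_semiconjBy_sq_of_commute hφ hφ_aff GammaBS.t_ne_one
    GammaBS.semiconjBy_a_t GammaBS.semiconjBy_b_t GammaBS.commute_a_b

end
end
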